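/- arXiv:1903.11644 — 7 statements merged into one kernel-verified Lean document; each statement's English description precedes it below -/
import Mathlib

section
/- (Minimum Principle) Let f : [a,b] → ℝ be C^3 with negative Schwarzian derivative and Df(x) ≠ 0 for all x ∈ [a,b]. Then for every x in the open interval (a,b), |Df(x)| > min{|Df(a)|, |Df(b)|}. -/
/-! At an interior minimum `c` of `|f'|` the quotient `f'/f'(c)` has a local minimum, so
`f''(c) = 0` and, by the second-order necessary condition, `f'''(c)/f'(c) ≥ 0`; there the
Schwarzian reduces to `f'''(c)/f'(c)`, contradicting `Sf < 0`. Hence `|f'|` has no interior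
local minimum on `[a,b]`, so it exceeds its smaller endpoint value at every interior point. -/

open Set

noncomputable def schwarzian (f : ℝ → ℝ) (x : ℝ) : ℝ :=
  iteratedDeriv 3 f x / deriv f x - (3 / 2) * (iteratedDeriv 2 f x / deriv f x) ^ 2

open Filter Topology

lemma min_lt_of_forall_mem_Ioo_not_isLocalMin {h : ℝ → ℝ} {a b x : ℝ}
    (hcont : ContinuousOn h (Icc a b)) (hno : ∀ c ∈ Ioo a b, ¬IsLocalMin h c)
    (hx : x ∈ Ioo a b) : min (h a) (h b) < h x := by
  by_contra! hle
  obtain ⟨c, hc, hmin⟩ :=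
    isCompact_Icc.exists_isMinOn (nonempty_Icc.2 (hx.1.trans hx.2).le) hcont
  suffices ∃ d ∈ Ioo a b, IsMinOn h (Icc a b) d by
    obtain ⟨d, hd, hdmin⟩ := this
    exact hno d hd (hdmin.isLocalMin (Icc_mem_nhds hd.1 hd.2))
  rcases eq_endpoints_or_mem_Ioo_of_mem_Icc hc with rfl | rfl | hc
  · exact ⟨x, hx, fun y hy => (hle.trans (min_le_left _ _)).trans (hmin hy)⟩
  · exact ⟨x, hx, fun y hy => (hle.trans (min_le_right _ _)).trans (hmin hy)⟩
  · exact ⟨c, hc, hmin⟩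

lemma IsLocalMin.deriv_deriv_nonneg {g : ℝ → ℝ} {c : ℝ} (hmin : IsLocalMin g c)
    (hc : ContinuousAt g c) : 0 ≤ deriv (deriv g) c := by
  by_contra! hneg
  have hmax := isLocalMax_of_deriv_deriv_neg hneg hmin.deriv_eq_zero hc
  have hconst : g =ᶠ[𝓝 c] fun _ => g c := by
    filter_upwards [hmin, hmax] with y hy₁ hy₂ using le_antisymm hy₂ hy₁
  have hderiv : deriv g =ᶠ[𝓝 c] fun _ => 0 := by
    simpa using hconst.deriv
  simp [hderiv.deriv_eq] at hneg

lemma IsLocalMin.div_const_of_abs {g : ℝ → ℝ} {c : ℝ} (hmin : IsLocalMin (fun x => |g x|) c)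
    (hc : ContinuousAt g c) (hgc : g c ≠ 0) : IsLocalMin (fun x => g x / g c) c := by
  have hpos : ∀ᶠ x in 𝓝 c, 0 < g x / g c :=
    (hc.div_const (g c)).eventually (lt_mem_nhds (by simp [hgc]))
  filter_upwards [hmin, hpos] with y hy hpos_y
  calc g c / g c = |g c| / |g c| := by simp [hgc]
    _ ≤ |g y| / |g c| := div_le_div_of_nonneg_right hy (abs_nonneg _)
    _ = g y / g c := by rw [← abs_div, abs_of_pos hpos_y]

lemma schwarzian_eq_of_iteratedDeriv_two_eq_zero {f : ℝ → ℝ} {c : ℝ}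
    (h2 : iteratedDeriv 2 f c = 0) : schwarzian f c = iteratedDeriv 3 f c / deriv f c := by
  simp [schwarzian, h2]

lemma schwarzian_nonneg_of_isLocalMin_abs_deriv {f : ℝ → ℝ} {c : ℝ}
    (hmin : IsLocalMin (fun x => |deriv f x|) c) (hc : ContinuousAt (deriv f) c)
    (hfc : deriv f c ≠ 0) : 0 ≤ schwarzian f c := by
  have hquot := hmin.div_const_of_abs hc hfc
  have hderiv : deriv (fun x => deriv f x / deriv f c) = fun x => deriv (deriv f) x / deriv f c :=
    funext fun x => deriv_div_const _
  have h2 : iteratedDeriv 2 f c = 0 := by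
    have := hquot.deriv_eq_zero
    rw [hderiv, div_eq_zero_iff] at this
    simpa [iteratedDeriv_eq_iterate, hfc] using this
  have h3 := hquot.deriv_deriv_nonneg (hc.div_const _)
  rw [hderiv, deriv_div_const] at h3
  rw [schwarzian_eq_of_iteratedDeriv_two_eq_zero h2, iteratedDeriv_eq_iterate]
  simpa using h3

theorem minimum_principle_general (f : ℝ → ℝ) (a b : ℝ)
    (hf : ContDiff ℝ 3 f)
    (hS : ∀ x ∈ Icc a b, schwarzian f x < 0)
    (hd : ∀ x ∈ Icc a b, deriv f x ≠ 0) :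
    ∀ x ∈ Ioo a b, min |deriv f a| |deriv f b| < |deriv f x| := by
  have hcont : Continuous (deriv f) := hf.continuous_deriv (by norm_num)
  refine fun x hx => min_lt_of_forall_mem_Ioo_not_isLocalMin (h := fun x => |deriv f x|)
    hcont.abs.continuousOn (fun c hc hmin => ?_) hx
  have hcI := Ioo_subset_Icc_self hc
  exact (hS c hcI).not_ge
    (schwarzian_nonneg_of_isLocalMin_abs_deriv hmin hcont.continuousAt (hd c hcI))

/-- Minimum Principle: if `f` is `C³` on `[a,b]` with negative Schwarzian derivative
and nonvanishing derivative, then for `x ∈ (a,b)`,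
`|Df(x)| > min{|Df(a)|, |Df(b)|}`. -/
theorem minimum_principle (f : ℝ → ℝ) (a b : ℝ) (hab : a < b)
    (hf : ContDiff ℝ 3 f)
    (hS : ∀ x ∈ Icc a b, schwarzian f x < 0)
    (hd : ∀ x ∈ Icc a b, deriv f x ≠ 0) :
    ∀ x ∈ Ioo a b, min |deriv f a| |deriv f b| < |deriv f x| :=
  minimum_principle_general f a b hf hS hd
end

section
/- (Singer) Let f : I → I be a C^3 map of a compact interval with negative Schwarzian derivative. Then the immediate basin of any attracting periodic orbit of f contains either a critical point of f (a point where Df vanishes) or a boundary point of I. -/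
open Set Filter Topology

/-!
Suppose the immediate basin contains neither a critical point nor an endpoint of `[a, b]`, and
let `J` be the component of the basin containing `p`. All forward images of `J` lie in the
immediate basin, so every iterate of `f` has nonvanishing derivative and negative Schwarzian
derivative on `J`. If the basin is a neighbourhood (relative to `[a, b]`) of a point of
`closure J`, that neighbourhood is an interval meeting `J`, hence contained in `J`; so the point
lies in `J`, is neither `a` nor `b`, and is interior to `J`. In particular the attracting point
`p` is interior to the interval `J`.

Let `F = f^(2m)`, an increasing self-map of `J`. A frontier point of `J` mapped into the interior
of `J`, or an attracting fixed frontier point, would have a neighbourhood in the basin; hence `F`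
fixes both endpoints, with `F' ≥ 1` there. Negative Schwarzian derivative forbids a positive
local minimum of `F'` inside `J`: there `F'' = 0`, so `SF = F'''/F' < 0` makes it a strict local
maximum as well. Thus `F'(p) ≥ 1`, contradicting `F'(p) = ((f^m)'(p))² < 1`.
-/

open Function

theorem ContDiff.iterate {𝕜 E : Type*} [NontriviallyNormedField 𝕜] [NormedAddCommGroup E]
    [NormedSpace 𝕜 E] {n : WithTop ℕ∞} {f : E → E} (hf : ContDiff 𝕜 n f) (k : ℕ) :
    ContDiff 𝕜 n f^[k] := by
  induction k with
  | zero => exact contDiff_id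
  | succ k ih => exact ih.comp hf

theorem Function.IsPeriodicPt.iterate_mem_image_iterate_Iio {α : Type*} {f : α → α} {m : ℕ}
    {p : α} (h : IsPeriodicPt f m p) (hm : 0 < m) (k : ℕ) :
    f^[k] p ∈ (fun i => f^[i] p) '' Iio m :=
  ⟨k % m, Nat.mod_lt k hm, h.iterate_mod_apply k⟩

theorem Function.IsPeriodicPt.mapsTo_image_iterate_Iio {α : Type*} {f : α → α} {m : ℕ} {p : α}
    (h : IsPeriodicPt f m p) (hm : 0 < m) :
    MapsTo f ((fun i => f^[i] p) '' Iio m) ((fun i => f^[i] p) '' Iio m) := by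
  rintro _ ⟨i, -, rfl⟩
  exact iterate_succ_apply' f i p ▸ h.iterate_mem_image_iterate_Iio hm (i + 1)

theorem Function.IsPeriodicPt.deriv_iterate_mul {𝕜 : Type*} [NontriviallyNormedField 𝕜]
    {f : 𝕜 → 𝕜} {m : ℕ} {p : 𝕜} (h : IsPeriodicPt f m p) (hf : DifferentiableAt 𝕜 f^[m] p)
    (n : ℕ) : deriv f^[m * n] p = deriv f^[m] p ^ n := by
  rw [iterate_mul]
  exact (HasDerivAt.iterate (x := p) hf.hasDerivAt h n).deriv

section Schwarzian

variable {f g : ℝ → ℝ} {x : ℝ}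

theorem schwarzian_eq (f : ℝ → ℝ) (x : ℝ) : schwarzian f x =
    deriv (deriv (deriv f)) x / deriv f x - 3 / 2 * (deriv (deriv f) x / deriv f x) ^ 2 := by
  rw [schwarzian, iteratedDeriv_succ, iteratedDeriv_succ, iteratedDeriv_one]

theorem schwarzian_comp (hg : ContDiff ℝ 3 g) (hf : ContDiff ℝ 3 f) (hf' : deriv f x ≠ 0)
    (hg' : deriv g (f x) ≠ 0) :
    schwarzian (g ∘ f) x = schwarzian g (f x) * deriv f x ^ 2 + schwarzian f x := by
  have d0 {h : ℝ → ℝ} (hh : ContDiff ℝ 3 h) (y : ℝ) : HasDerivAt h (deriv h y) y :=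
    (hh.differentiable (by norm_num) y).hasDerivAt
  have d1 {h : ℝ → ℝ} (hh : ContDiff ℝ 3 h) (y : ℝ) :
      HasDerivAt (deriv h) (deriv (deriv h) y) y :=
    ((hh.iterate_deriv' 2 1).differentiable (by norm_num) y).hasDerivAt
  have d2 {h : ℝ → ℝ} (hh : ContDiff ℝ 3 h) (y : ℝ) :
      HasDerivAt (deriv (deriv h)) (deriv (deriv (deriv h)) y) y :=
    ((hh.iterate_deriv' 1 2).differentiable (by norm_num) y).hasDerivAt
  have e1 : deriv (g ∘ f) = fun y => deriv g (f y) * deriv f y :=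
    funext fun y => ((d0 hg (f y)).comp y (d0 hf y)).deriv
  have e2 : deriv (deriv (g ∘ f)) = fun y =>
      deriv (deriv g) (f y) * deriv f y * deriv f y + deriv g (f y) * deriv (deriv f) y :=
    e1 ▸ funext fun y => (((d1 hg (f y)).comp y (d0 hf y)).mul (d1 hf y)).deriv
  have e3 : deriv (deriv (deriv (g ∘ f))) x =
      (deriv (deriv (deriv g)) (f x) * deriv f x * deriv f x
          + deriv (deriv g) (f x) * deriv (deriv f) x) * deriv f x
        + deriv (deriv g) (f x) * deriv f x * deriv (deriv f) x
        + (deriv (deriv g) (f x) * deriv f x * deriv (deriv f) x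
          + deriv g (f x) * deriv (deriv (deriv f)) x) := by
    rw [e2]
    exact (((((d2 hg (f x)).comp x (d0 hf x)).mul (d1 hf x)).mul (d1 hf x)).add
      (((d1 hg (f x)).comp x (d0 hf x)).mul (d2 hf x))).deriv
  rw [schwarzian_eq, schwarzian_eq, schwarzian_eq, e3, e2, e1]
  field_simp
  ring

theorem deriv_iterate_ne_zero (hf : Differentiable ℝ f) {n : ℕ}
    (h : ∀ k < n, deriv f (f^[k] x) ≠ 0) : deriv f^[n] x ≠ 0 := by
  induction n with
  | zero => simp
  | succ n ih =>
    rw [iterate_succ', deriv_comp x (hf _) ((hf.iterate n) x)]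
    exact mul_ne_zero (h n n.lt_succ_self) (ih fun k hk => h k (hk.trans n.lt_succ_self))

theorem schwarzian_iterate_neg (hf : ContDiff ℝ 3 f) {n : ℕ} (hn : 0 < n)
    (h : ∀ k < n, deriv f (f^[k] x) ≠ 0 ∧ schwarzian f (f^[k] x) < 0) :
    schwarzian f^[n] x < 0 := by
  induction n, hn using Nat.le_induction with
  | base => simpa using (h 0 one_pos).2
  | succ n hn ih =>
    have hlt : ∀ k < n, k < n + 1 := fun k hk => hk.trans n.lt_succ_self
    have hd : deriv f^[n] x ≠ 0 := deriv_iterate_ne_zero (hf.differentiable (by norm_num))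
      fun k hk => (h k (hlt k hk)).1
    rw [iterate_succ', schwarzian_comp hf (hf.iterate n) hd (h n n.lt_succ_self).1]
    exact add_neg (mul_neg_of_neg_of_pos (h n n.lt_succ_self).2 (by positivity))
      (ih fun k hk => h k (hlt k hk))

theorem not_isLocalMin_deriv_of_schwarzian_neg (hcont : ContinuousAt (deriv f) x)
    (hpos : 0 < deriv f x) (hS : schwarzian f x < 0) : ¬IsLocalMin (deriv f) x := by
  intro hmin
  have h2 : deriv (deriv f) x = 0 := hmin.deriv_eq_zero
  have h3 : deriv (deriv (deriv f)) x < 0 := by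
    rw [schwarzian_eq, h2, zero_div, sq, mul_zero, mul_zero, sub_zero] at hS
    exact ((div_neg_iff.1 hS).resolve_left fun h => h.2.not_gt hpos).1
  have hconst : deriv f =ᶠ[𝓝 x] fun _ => deriv f x := by
    filter_upwards [hmin, isLocalMax_of_deriv_deriv_neg h3 h2 hcont] with y hy₁ hy₂
    exact le_antisymm hy₂ hy₁
  have h3' : deriv (deriv (deriv f)) x = 0 := by simpa using hconst.deriv.deriv_eq
  exact h3.ne h3'

theorem min_deriv_le_deriv_of_schwarzian_neg {α β : ℝ}
    (hcont : ContinuousOn (deriv f) (Icc α β)) (hpos : ∀ y ∈ Ioo α β, 0 < deriv f y)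
    (hS : ∀ y ∈ Ioo α β, schwarzian f y < 0) (hx : x ∈ Icc α β) :
    min (deriv f α) (deriv f β) ≤ deriv f x := by
  obtain ⟨c, hc, hmin⟩ := isCompact_Icc.exists_isMinOn ⟨x, hx⟩ hcont
  rcases eq_endpoints_or_mem_Ioo_of_mem_Icc hc with rfl | rfl | hc'
  · exact (min_le_left _ _).trans (hmin hx)
  · exact (min_le_right _ _).trans (hmin hx)
  · have hnhds : Icc α β ∈ 𝓝 c := Icc_mem_nhds hc'.1 hc'.2
    exact absurd (hmin.isLocalMin hnhds) (not_isLocalMin_deriv_of_schwarzian_neg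
      (hcont.continuousAt hnhds) (hpos c hc') (hS c hc'))

end Schwarzian

theorem one_le_deriv_of_schwarzian_neg_Icc {F : ℝ → ℝ} {α β p : ℝ} (hF : ContDiff ℝ 1 F)
    (hmaps : MapsTo F (Icc α β) (Icc α β)) (hp : p ∈ Ioo α β) (hp' : 0 < deriv F p)
    (hne : ∀ x ∈ Ioo α β, deriv F x ≠ 0) (hS : ∀ x ∈ Ioo α β, schwarzian F x < 0)
    (hinside : ∀ e ∈ ({α, β} : Set ℝ), F e ∉ Ioo α β)
    (hrepel : ∀ e ∈ ({α, β} : Set ℝ), F e = e → 1 ≤ |deriv F e|) : 1 ≤ deriv F p := by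
  have hαβ : α < β := hp.1.trans hp.2
  have hα : α ∈ Icc α β := left_mem_Icc.2 hαβ.le
  have hβ : β ∈ Icc α β := right_mem_Icc.2 hαβ.le
  have hcont : Continuous (deriv F) := hF.continuous_deriv le_rfl
  have hpos : ∀ x ∈ Ioo α β, 0 < deriv F x := by
    intro x hx
    by_contra! hneg
    obtain ⟨c, hc, hc0⟩ :=
      isPreconnected_Ioo.intermediate_value hx hp hcont.continuousOn ⟨hneg, hp'.le⟩
    exact hne c hc hc0
  have hnonneg : ∀ x ∈ Icc α β, 0 ≤ deriv F x := by
    rw [← closure_Ioo hαβ.ne]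
    exact closure_minimal (fun x hx => (hpos x hx).le) (isClosed_le continuous_const hcont)
  have hmono : StrictMonoOn F (Icc α β) :=
    strictMonoOn_of_deriv_pos (convex_Icc α β) hF.continuous.continuousOn (by simpa using hpos)
  have hend : ∀ e ∈ ({α, β} : Set ℝ), F e = α ∨ F e = β := fun e he =>
    (eq_endpoints_or_mem_Ioo_of_mem_Icc (hmaps (by rcases he with rfl | rfl <;> assumption)))
      |>.imp_right fun h => h.resolve_right (hinside e he)
  have hFα : F α = α := (hend α (by simp)).resolve_right fun h => by
    linarith [hmono hα hβ hαβ, (hmaps hβ).2]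
  have hFβ : F β = β := (hend β (by simp)).resolve_left fun h => by
    linarith [hmono hα hβ hαβ]
  have hα' : 1 ≤ deriv F α := by
    simpa [abs_of_nonneg (hnonneg _ hα)] using hrepel _ (by simp) hFα
  have hβ' : 1 ≤ deriv F β := by
    simpa [abs_of_nonneg (hnonneg _ hβ)] using hrepel _ (by simp) hFβ
  calc 1 ≤ min (deriv F α) (deriv F β) := le_min hα' hβ'
    _ ≤ deriv F p :=
      min_deriv_le_deriv_of_schwarzian_neg hcont.continuousOn hpos hS (Ioo_subset_Icc_self hp)

theorem one_le_deriv_of_schwarzian_neg {F : ℝ → ℝ} {J : Set ℝ} {p : ℝ} (hF : ContDiff ℝ 1 F)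
    (hJ : IsPreconnected J) (hJb : Bornology.IsBounded J) (hFJ : MapsTo F J J) (hp : J ∈ 𝓝 p)
    (hp' : 0 < deriv F p) (hne : ∀ x ∈ J, deriv F x ≠ 0) (hS : ∀ x ∈ J, schwarzian F x < 0)
    (hinside : ∀ e ∈ frontier J, F e ∉ interior J)
    (hrepel : ∀ e ∈ frontier J, F e = e → 1 ≤ |deriv F e|) : 1 ≤ deriv F p := by
  have hsub : J ⊆ Icc (sInf J) (sSup J) := subset_Icc_csInf_csSup hJb.bddBelow hJb.bddAbove
  have hpJ : p ∈ Ioo (sInf J) (sSup J) := Icc_mem_nhds_iff.1 (mem_of_superset hp hsub)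
  have hIoo : Ioo (sInf J) (sSup J) ⊆ J := IsConnected.Ioo_csInf_csSup_subset
    ⟨⟨p, mem_of_mem_nhds hp⟩, hJ⟩ hJb.bddBelow hJb.bddAbove
  have hint : interior J = Ioo (sInf J) (sSup J) :=
    ((interior_mono hsub).trans interior_Icc.subset).antisymm (interior_maximal hIoo isOpen_Ioo)
  have hcl : closure J = Icc (sInf J) (sSup J) :=
    (closure_minimal hsub isClosed_Icc).antisymm
      ((closure_Ioo (hpJ.1.trans hpJ.2).ne).symm.subset.trans (closure_mono hIoo))
  have hfr : {sInf J, sSup J} ⊆ frontier J := by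
    rw [frontier, hcl, hint, Icc_sdiff_Ioo_same (hpJ.1.trans hpJ.2).le]
  exact one_le_deriv_of_schwarzian_neg_Icc hF (hcl ▸ hFJ.closure hF.continuous) hpJ hp'
    (fun x hx => hne x (hIoo hx)) (fun x hx => hS x (hIoo hx))
    (fun e he => hint ▸ hinside e (hfr he)) (fun e he => hrepel e (hfr he))

theorem eventually_tendsto_iterate_of_abs_deriv_lt_one {f : ℝ → ℝ} {q : ℝ} (hf : ContDiff ℝ 1 f)
    (hq : f q = q) (hf' : |deriv f q| < 1) :
    ∀ᶠ y in 𝓝 q, Tendsto (fun n => f^[n] y) atTop (𝓝 q) := by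
  obtain ⟨μ, hμ, hμ1⟩ := exists_between hf'
  have hμ0 : 0 ≤ μ := (abs_nonneg _).trans hμ.le
  obtain ⟨δ, hδ, hball⟩ := Metric.nhds_basis_closedBall.eventually_iff.1 <|
    (hf.continuous_deriv le_rfl).abs.continuousAt.eventually_lt continuousAt_const hμ
  have hcontr : ∀ y ∈ Metric.closedBall q δ, dist (f y) q ≤ μ * dist y q := by
    intro y hy
    have hmvt := (convex_closedBall q δ).norm_image_sub_le_of_norm_deriv_le
      (fun z _ => hf.differentiable one_ne_zero z) (fun z hz => (hball hz).le)
      (Metric.mem_closedBall_self hδ.le) hy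
    rwa [hq, ← dist_eq_norm, ← dist_eq_norm] at hmvt
  have hiter : ∀ n, ∀ y ∈ Metric.closedBall q δ, dist (f^[n] y) q ≤ μ ^ n * dist y q := by
    intro n
    induction n with
    | zero => simp
    | succ n ih =>
      intro y hy
      have hfy : f y ∈ Metric.closedBall q δ :=
        ((hcontr y hy).trans (mul_le_of_le_one_left dist_nonneg hμ1.le)).trans hy
      calc dist (f^[n + 1] y) q = dist (f^[n] (f y)) q := rfl
        _ ≤ μ ^ n * dist (f y) q := ih _ hfy
        _ ≤ μ ^ n * (μ * dist y q) := by gcongr; exact hcontr y hy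
        _ = μ ^ (n + 1) * dist y q := by ring
  filter_upwards [Metric.closedBall_mem_nhds q hδ] with y hy
  refine tendsto_iff_dist_tendsto_zero.2 <| squeeze_zero (fun _ => dist_nonneg)
    (fun n => hiter n y hy) ?_
  simpa using (tendsto_pow_atTop_nhds_zero_of_lt_one hμ0 hμ1).mul_const (dist y q)

section Basin

open Metric

variable {X : Type*} [PseudoMetricSpace X] {f : X → X} {s O : Set X} {x q : X} {k M : ℕ}

def basin (f : X → X) (s O : Set X) : Set X :=
  {x | x ∈ s ∧ Tendsto (fun n => infDist (f^[n] x) O) atTop (𝓝 0)}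

theorem tendsto_infDist_iterate_iterate_iff :
    Tendsto (fun n => infDist (f^[n] (f^[k] x)) O) atTop (𝓝 0) ↔
      Tendsto (fun n => infDist (f^[n] x) O) atTop (𝓝 0) := by
  simp only [← iterate_add_apply]
  exact tendsto_add_atTop_iff_nat (f := fun n => infDist (f^[n] x) O) k

theorem mapsTo_iterate_basin (hs : MapsTo f s s) (k : ℕ) :
    MapsTo f^[k] (basin f s O) (basin f s O) :=
  fun _ hx => ⟨hs.iterate k hx.1, tendsto_infDist_iterate_iterate_iff.2 hx.2⟩

theorem mem_basin_of_iterate_mem (hx : x ∈ s) (h : f^[k] x ∈ basin f s O) :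
    x ∈ basin f s O :=
  ⟨hx, tendsto_infDist_iterate_iterate_iff.1 h.2⟩

theorem mem_basin_of_forall_iterate_mem (hx : x ∈ s) (h : ∀ n, f^[n] x ∈ O) :
    x ∈ basin f s O :=
  ⟨hx, tendsto_const_nhds.congr fun n => (infDist_zero_of_mem (h n)).symm⟩

theorem basin_mem_nhdsWithin_of_iterate_mem_interior (hf : Continuous f)
    (h : f^[k] x ∈ interior (basin f s O)) : basin f s O ∈ 𝓝[s] x := by
  have : f^[k] ⁻¹' interior (basin f s O) ∈ 𝓝 x :=
    (hf.iterate k).continuousAt.preimage_mem_nhds (isOpen_interior.mem_nhds h)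
  filter_upwards [self_mem_nhdsWithin, nhdsWithin_le_nhds this] with y hys hy
  exact mem_basin_of_iterate_mem hys (interior_subset hy)

theorem mem_basin_of_tendsto_iterate (hf : Continuous f) (hOf : MapsTo f O O) (hq : q ∈ O)
    (hM : 0 < M) (hx : x ∈ s) (h : Tendsto (fun n => (f^[M])^[n] x) atTop (𝓝 q)) :
    x ∈ basin f s O := by
  refine ⟨hx, ?_⟩
  let G : X → ℝ := fun z => ∑ r ∈ Finset.range M, infDist (f^[r] z) O
  have hG : Continuous G :=
    continuous_finsetSum _ fun r _ => (continuous_infDist_pt O).comp (hf.iterate r)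
  have hGq : G q = 0 := Finset.sum_eq_zero fun r _ => infDist_zero_of_mem (hOf.iterate r hq)
  have hle : ∀ n, infDist (f^[n] x) O ≤ G ((f^[M])^[n / M] x) := by
    intro n
    rw [← iterate_mul]
    conv_lhs => rw [← Nat.mod_add_div n M, iterate_add_apply]
    exact Finset.single_le_sum (f := fun r => infDist (f^[r] _) O) (fun _ _ => infDist_nonneg)
      (Finset.mem_range.2 (Nat.mod_lt n hM))
  have hlim : Tendsto (fun n => G ((f^[M])^[n / M] x)) atTop (𝓝 0) :=
    hGq ▸ (hG.tendsto q).comp (h.comp (Nat.tendsto_div_const_atTop hM.ne'))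
  exact squeeze_zero (fun _ => infDist_nonneg) hle hlim

theorem mem_of_tendsto_iterate_of_mem_basin (hO : IsClosed O) (hO' : O.Nonempty)
    (hx : x ∈ basin f s O) (hM : 0 < M) (h : Tendsto (fun n => (f^[M])^[n] x) atTop (𝓝 q)) :
    q ∈ O := by
  have h₁ := hx.2.comp (tendsto_atTop_mono (fun n => Nat.le_mul_of_pos_left n hM) tendsto_id)
  simp only [comp_def, iterate_mul] at h₁
  exact (hO.mem_iff_infDist_zero hO').2
    (tendsto_nhds_unique (((continuous_infDist_pt O).tendsto q).comp h) h₁)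

end Basin

theorem basin_mem_nhdsWithin_of_abs_deriv_lt_one {f : ℝ → ℝ} {s O : Set ℝ} {M : ℕ} {e : ℝ}
    (hf : ContDiff ℝ 1 f) (hO : IsClosed O) (hO' : O.Nonempty) (hOf : MapsTo f O O)
    (hM : 0 < M) (he : e ∈ closure (basin f s O)) (hfix : f^[M] e = e)
    (hatt : |deriv f^[M] e| < 1) : basin f s O ∈ 𝓝[s] e := by
  have hattr := eventually_tendsto_iterate_of_abs_deriv_lt_one (hf.iterate M) hfix hatt
  obtain ⟨x, hx, hxB⟩ := mem_closure_iff_nhds.1 he _ hattr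
  have heO : e ∈ O := mem_of_tendsto_iterate_of_mem_basin hO hO' hxB hM hx
  filter_upwards [self_mem_nhdsWithin, nhdsWithin_le_nhds hattr] with y hys hy
  exact mem_basin_of_tendsto_iterate hf.continuous hOf heO hM hys hy

section Components

variable {X : Type*} [TopologicalSpace X]

theorem mapsTo_connectedComponentIn {Y : Type*} [TopologicalSpace Y] {g : X → Y} {B : Set X}
    {C : Set Y} {x : X} (hg : ContinuousOn g B) (hBC : MapsTo g B C) (hx : x ∈ B) :
    MapsTo g (connectedComponentIn B x) (connectedComponentIn C (g x)) :=
  fun _ hy => connectedComponentIn_mono _ hBC.image_subset (hg.mapsTo_connectedComponentIn hx hy)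

theorem iterate_mem_iUnion_connectedComponentIn {f : X → X} {B : Set X} {p x : X} {m : ℕ}
    (hf : Continuous f) (hB : MapsTo f B B) (hp : p ∈ B) (hper : IsPeriodicPt f m p)
    (hm : 0 < m) (hx : x ∈ connectedComponentIn B p) (k : ℕ) :
    f^[k] x ∈ ⋃ i ∈ Finset.range m, connectedComponentIn B (f^[i] p) := by
  have := mapsTo_connectedComponentIn (hf.iterate k).continuousOn (hB.iterate k) hp hx
  rw [← hper.iterate_mod_apply] at this
  exact mem_iUnion₂.2 ⟨k % m, Finset.mem_range.2 (Nat.mod_lt k hm), this⟩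

end Components

theorem connectedComponentIn_mem_nhds_of_mem_nhdsWithin {B : Set ℝ} {a b x e : ℝ}
    (hB : B ⊆ Icc a b) (ha : a ∉ connectedComponentIn B x) (hb : b ∉ connectedComponentIn B x)
    (he : e ∈ closure (connectedComponentIn B x)) (hBe : B ∈ 𝓝[Icc a b] e) :
    connectedComponentIn B x ∈ 𝓝 e := by
  set J := connectedComponentIn B x
  obtain ⟨ε, hε, hball⟩ := Metric.mem_nhdsWithin_iff.1 hBe
  obtain ⟨z, hzJ, hz⟩ := Metric.mem_closure_iff.1 he ε hε
  have hJB : J ⊆ B := connectedComponentIn_subset B x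
  have hN : IsPreconnected (Metric.ball e ε ∩ Icc a b) := by
    rw [Real.ball_eq_Ioo]
    exact (ordConnected_Ioo.inter ordConnected_Icc).isPreconnected
  have hNJ : Metric.ball e ε ∩ Icc a b ⊆ J := by
    rw [show J = connectedComponentIn B z from connectedComponentIn_eq hzJ]
    refine subset_union_left.trans <| (hN.union' ?_ isPreconnected_connectedComponentIn)
      |>.subset_connectedComponentIn (Or.inr hzJ) (union_subset hball hJB)
    exact ⟨z, ⟨Metric.mem_ball'.2 hz, hB (hJB hzJ)⟩, hzJ⟩
  have heab : e ∈ Icc a b := closure_minimal (hJB.trans hB) isClosed_Icc he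
  have heJ : e ∈ J := hNJ ⟨Metric.mem_ball_self hε, heab⟩
  have he' : e ∈ Ioo a b := ⟨heab.1.lt_of_ne (ne_of_mem_of_not_mem heJ ha).symm,
    heab.2.lt_of_ne (ne_of_mem_of_not_mem heJ hb)⟩
  exact mem_of_superset (inter_mem (Metric.ball_mem_nhds e hε) (Icc_mem_nhds he'.1 he'.2)) hNJ

theorem singer_general (f : ℝ → ℝ) (a b : ℝ)
    (hf : ContDiff ℝ 3 f)
    (hmaps : MapsTo f (Icc a b) (Icc a b))
    (hS : ∀ x ∈ Icc a b, deriv f x ≠ 0 → schwarzian f x < 0)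
    (p : ℝ) (hp : p ∈ Icc a b) (m : ℕ) (hm : 1 ≤ m)
    (hper : f^[m] p = p) (hatt : |deriv (f^[m]) p| < 1) :
    -- the orbit of `p`
    let orb : Set ℝ := (fun i => f^[i] p) '' Set.Iio m
    -- the basin of attraction of the orbit
    let basin : Set ℝ :=
      {x | x ∈ Icc a b ∧ Tendsto (fun n => Metric.infDist (f^[n] x) orb) atTop (𝓝 0)}
    -- the immediate basin: union of the components of the basin meeting the orbit
    let ib : Set ℝ := ⋃ i ∈ Finset.range m, connectedComponentIn basin (f^[i] p)
    ∃ x ∈ ib, deriv f x = 0 ∨ x = a ∨ x = b := by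
  intro O B ib
  by_contra! hib
  have hf1 : ContDiff ℝ 1 f := hf.of_le (by norm_num)
  have hperiodic : IsPeriodicPt f m p := hper
  have hO : IsClosed O := ((finite_Iio m).image _).isClosed
  have hO' : O.Nonempty := ⟨p, hperiodic.iterate_mem_image_iterate_Iio hm 0⟩
  have hOf : MapsTo f O O := hperiodic.mapsTo_image_iterate_Iio hm
  have hBf : ∀ k, MapsTo f^[k] B B := mapsTo_iterate_basin hmaps
  have hpB : p ∈ B :=
    mem_basin_of_forall_iterate_mem hp (hperiodic.iterate_mem_image_iterate_Iio hm)
  set J := connectedComponentIn B p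
  have hJB : J ⊆ B := connectedComponentIn_subset B p
  have hJ : ∀ x ∈ J, ∀ k, f^[k] x ∈ ib := fun x hx =>
    iterate_mem_iUnion_connectedComponentIn hf.continuous (hBf 1) hpB hperiodic hm hx
  have hcrit : ∀ x ∈ J, ∀ k, deriv f (f^[k] x) ≠ 0 := fun x hx k => (hib _ (hJ x hx k)).1
  have hderiv : ∀ x ∈ J, ∀ n, deriv f^[n] x ≠ 0 := fun x hx n =>
    deriv_iterate_ne_zero (hf1.differentiable one_ne_zero) fun k _ => hcrit x hx k
  have hschwarzian : ∀ x ∈ J, ∀ n, 0 < n → schwarzian f^[n] x < 0 := fun x hx n hn =>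
    schwarzian_iterate_neg hf hn fun k _ =>
      ⟨hcrit x hx k, hS _ (hmaps.iterate k (hJB hx).1) (hcrit x hx k)⟩
  have hnhds : ∀ e ∈ closure J, B ∈ 𝓝[Icc a b] e → J ∈ 𝓝 e := fun e he hBe =>
    connectedComponentIn_mem_nhds_of_mem_nhdsWithin (fun x hx => hx.1)
      (fun ha => (hib a (hJ a ha 0)).2.1 rfl) (fun hb => (hib b (hJ b hb 0)).2.2 rfl) he hBe
  have hfrontier : ∀ e ∈ frontier J, B ∉ 𝓝[Icc a b] e := fun e he hBe =>
    he.2 (mem_interior_iff_mem_nhds.2 (hnhds e he.1 hBe))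
  have hpJ : J ∈ 𝓝 p := hnhds p (subset_closure (mem_connectedComponentIn hpB)) <|
    basin_mem_nhdsWithin_of_abs_deriv_lt_one hf1 hO hO' hOf hm (subset_closure hpB) hper hatt
  -- `f^[m * 2]` rather than `f^[m]`, so that the derivative at `p` is positive
  have hFJ : MapsTo f^[m * 2] J J := by
    simpa only [(hperiodic.mul_const 2).eq] using
      mapsTo_connectedComponentIn (hf.continuous.iterate (m * 2)).continuousOn (hBf _) hpB
  have hFp : deriv f^[m * 2] p = deriv f^[m] p ^ 2 :=
    hperiodic.deriv_iterate_mul ((hf1.iterate m).differentiable one_ne_zero p) 2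
  have hFp' : 0 < deriv f^[m * 2] p := by
    have hd := hderiv p (mem_connectedComponentIn hpB) m
    rw [hFp]
    positivity
  have key := one_le_deriv_of_schwarzian_neg (hf1.iterate (m * 2))
    isPreconnected_connectedComponentIn (Metric.isBounded_Icc a b |>.subset fun x hx => (hJB hx).1)
    hFJ hpJ hFp' (fun x hx => hderiv x hx _) (fun x hx => hschwarzian x hx _ (by omega))
    (fun e he hFe => hfrontier e he <|
      basin_mem_nhdsWithin_of_iterate_mem_interior hf.continuous (interior_mono hJB hFe))
    (fun e he hfix => not_lt.1 fun hlt => hfrontier e he <|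
      basin_mem_nhdsWithin_of_abs_deriv_lt_one hf1 hO hO' hOf (by omega) (closure_mono hJB he.1)
        hfix hlt)
  rw [hFp] at key
  exact key.not_gt ((sq_lt_one_iff_abs_lt_one _).2 hatt)

/-- Singer's theorem: for a `C³` map `f` of the compact interval `[a,b]` into itself
with negative Schwarzian derivative, the immediate basin of any attracting periodic
orbit contains either a critical point of `f` or a boundary point of `[a,b]`. -/
theorem singer (f : ℝ → ℝ) (a b : ℝ) (hab : a < b)
    (hf : ContDiff ℝ 3 f)
    (hmaps : MapsTo f (Icc a b) (Icc a b))
    (hS : ∀ x ∈ Icc a b, deriv f x ≠ 0 → schwarzian f x < 0)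
    (p : ℝ) (hp : p ∈ Icc a b) (m : ℕ) (hm : 1 ≤ m)
    (hper : f^[m] p = p) (hatt : |deriv (f^[m]) p| < 1) :
    -- the orbit of `p`
    let orb : Set ℝ := (fun i => f^[i] p) '' Set.Iio m
    -- the basin of attraction of the orbit
    let basin : Set ℝ :=
      {x | x ∈ Icc a b ∧ Tendsto (fun n => Metric.infDist (f^[n] x) orb) atTop (𝓝 0)}
    -- the immediate basin: union of the components of the basin meeting the orbit
    let ib : Set ℝ := ⋃ i ∈ Finset.range m, connectedComponentIn basin (f^[i] p)
    ∃ x ∈ ib, deriv f x = 0 ∨ x = a ∨ x = b :=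
  singer_general f a b hf hmaps hS p hp m hm hper hatt
end

section
/- Let k_F and k_G be two Cantor maps, with inverse branches K^F_±, K^G_± respectively. Then there exists a strictly increasing continuous map ψ : [0,1] → [0,1] such that ψ ∘ K^F_+ = K^G_+ ∘ ψ and ψ ∘ K^F_- = K^G_- ∘ ψ. Moreover, the restriction of ψ to the Cantor set of k_F is uniquely determined. -/
open Set

/-- A Cantor map: a differentiable map `k : [0,a] ∪ [b,1] → [0,1]` with
`k(0)=k(1)=0`, `k(a)=k(b)=1` and `|k'| > γ > 1`, together with its two inverse
branches `Kp = (k|_{[0,a]})⁻¹` and `Km = (k|_{[b,1]})⁻¹`. -/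
structure CantorMap where
  a : ℝ
  b : ℝ
  γ : ℝ
  k : ℝ → ℝ
  Kp : ℝ → ℝ
  Km : ℝ → ℝ
  ha : 0 < a
  hab : a < b
  hb : b < 1
  k0 : k 0 = 0
  k1 : k 1 = 0
  ka : k a = 1
  kb : k b = 1
  k_diff : ∀ y ∈ Icc 0 a ∪ Icc b 1, DifferentiableAt ℝ k y
  hγ : 1 < γ
  k_expand : ∀ y ∈ Icc 0 a ∪ Icc b 1, γ < |deriv k y|
  Kp_mem : ∀ y ∈ Icc (0:ℝ) 1, Kp y ∈ Icc 0 a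
  Kp_right_inv : ∀ y ∈ Icc (0:ℝ) 1, k (Kp y) = y
  Kp_left_inv : ∀ x ∈ Icc 0 a, Kp (k x) = x
  Km_mem : ∀ y ∈ Icc (0:ℝ) 1, Km y ∈ Icc b 1
  Km_right_inv : ∀ y ∈ Icc (0:ℝ) 1, k (Km y) = y
  Km_left_inv : ∀ x ∈ Icc b 1, Km (k x) = x

/-- The Cantor set associated to a Cantor map: `𝒦 = ⋂ₙ k⁻ⁿ([0,a] ∪ [b,1])`. -/
def CantorMap.cantorSet (C : CantorMap) : Set ℝ :=
  ⋂ n : ℕ, (C.k^[n]) ⁻¹' (Icc 0 C.a ∪ Icc C.b 1)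

/-- `ψ` is a strictly increasing continuous self-map of `[0,1]` intertwining the
inverse branches of the Cantor maps `F` and `G`. -/
def Conjugating (F G : CantorMap) (ψ : ℝ → ℝ) : Prop :=
  ContinuousOn ψ (Icc 0 1) ∧ StrictMonoOn ψ (Icc 0 1) ∧ MapsTo ψ (Icc 0 1) (Icc 0 1) ∧
    (∀ y ∈ Icc (0:ℝ) 1, ψ (F.Kp y) = G.Kp (ψ y)) ∧
    (∀ y ∈ Icc (0:ℝ) 1, ψ (F.Km y) = G.Km (ψ y))

/-!
On `[0, a_F]` and `[b_F, 1]` the two conjugacy equations say `ψ = K^G_± ∘ ψ ∘ k_F`. By the mean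
value theorem the inverse branches of `k_G` contract by `γ_G⁻¹`, so the operator `conjOp` which
is `ψ ↦ K^G_± ∘ ψ ∘ k_F` on these pieces and affine on the gap is a `γ_G⁻¹`-contraction for the
sup distance.

Uniqueness: orbits of points of `𝒦_F` never enter the gap, so two conjugacies differ there by at
most `γ_G⁻ⁿ` for every `n`.

Existence: the iterates of `conjOp` starting from the identity converge uniformly to a continuous
monotone fixed point. It is strictly increasing because `k_F` expands distances by `γ_F`: two
distinct points cannot stay in a common piece under all iterates of `k_F`, and once they straddle
the gap the fixed point separates them through the strictly increasing affine part.
-/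

open Filter Topology

section Expanding

variable {f g : ℝ → ℝ} {s t : Set ℝ} {u v γ : ℝ}

theorem mul_abs_sub_le_abs_sub_of_lt_abs_deriv (hd : ∀ x ∈ Icc u v, DifferentiableAt ℝ f x)
    (hγ : ∀ x ∈ Icc u v, γ < |deriv f x|) {x y : ℝ} (hx : x ∈ Icc u v) (hy : y ∈ Icc u v) :
    γ * |x - y| ≤ |f x - f y| := by
  wlog hxy : y < x generalizing x y
  · rcases (not_lt.1 hxy).eq_or_lt with rfl | hlt
    · simp
    · rw [abs_sub_comm x, abs_sub_comm (f x)]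
      exact this hy hx hlt
  have hsub : Icc y x ⊆ Icc u v := Icc_subset_Icc hy.1 hx.2
  obtain ⟨c, hc, hslope⟩ := exists_deriv_eq_slope f hxy
    (fun z hz => (hd z (hsub hz)).continuousAt.continuousWithinAt)
    (fun z hz => (hd z (hsub (Ioo_subset_Icc_self hz))).differentiableWithinAt)
  have := hγ c (hsub (Ioo_subset_Icc_self hc))
  rw [hslope, abs_div, lt_div_iff₀ (abs_pos.2 (sub_ne_zero.2 hxy.ne'))] at this
  exact this.le

theorem injOn_of_mul_abs_sub_le (hγ : 0 < γ)
    (h : ∀ x ∈ s, ∀ y ∈ s, γ * |x - y| ≤ |f x - f y|) : InjOn f s := by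
  intro x hx y hy hxy
  have := h x hx y hy
  rw [hxy, sub_self, abs_zero] at this
  exact sub_eq_zero.1 (abs_nonpos_iff.1 (nonpos_of_mul_nonpos_right this hγ))

theorem abs_sub_le_div_of_rightInvOn (hγ : 0 < γ)
    (h : ∀ x ∈ t, ∀ y ∈ t, γ * |x - y| ≤ |f x - f y|) (hg : MapsTo g s t)
    (hfg : RightInvOn g f s) {x y : ℝ} (hx : x ∈ s) (hy : y ∈ s) :
    |g x - g y| ≤ |x - y| / γ := by
  rw [le_div_iff₀ hγ, mul_comm]
  simpa only [hfg hx, hfg hy] using h _ (hg hx) _ (hg hy)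

theorem continuousOn_of_abs_sub_le_div (hγ : 0 < γ)
    (h : ∀ x ∈ s, ∀ y ∈ s, |g x - g y| ≤ |x - y| / γ) : ContinuousOn g s := by
  refine (LipschitzOnWith.of_dist_le_mul (K := Real.toNNReal γ⁻¹) fun x hx y hy => ?_).continuousOn
  rw [Real.dist_eq, Real.dist_eq, Real.coe_toNNReal _ (inv_nonneg.2 hγ.le), inv_mul_eq_div]
  exact h x hx y hy

end Expanding

namespace CantorMap

variable (C : CantorMap)

theorem γ_pos : 0 < C.γ := one_pos.trans C.hγ

theorem tendsto_inv_γ_pow : Tendsto (C.γ⁻¹ ^ ·) atTop (𝓝 0) :=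
  tendsto_pow_atTop_nhds_zero_of_lt_one (inv_nonneg.2 C.γ_pos.le) (inv_lt_one_of_one_lt₀ C.hγ)

theorem tendsto_inv_γ_pow_div : Tendsto (C.γ⁻¹ ^ · / (1 - C.γ⁻¹)) atTop (𝓝 0) := by
  simpa using C.tendsto_inv_γ_pow.div_const (1 - C.γ⁻¹)

theorem Icc_zero_a_subset : Icc 0 C.a ⊆ Icc 0 1 :=
  Icc_subset_Icc_right (C.hab.trans C.hb).le

theorem Icc_b_one_subset : Icc C.b 1 ⊆ Icc 0 1 :=
  Icc_subset_Icc_left (C.ha.trans C.hab).le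

theorem Icc_a_b_subset : Icc C.a C.b ⊆ Icc 0 1 :=
  Icc_subset_Icc C.ha.le C.hb.le

theorem Icc_zero_one_eq_union : Icc 0 1 = Icc 0 C.a ∪ Icc C.a C.b ∪ Icc C.b 1 := by
  rw [Icc_union_Icc_eq_Icc C.ha.le C.hab.le, Icc_union_Icc_eq_Icc (C.ha.trans C.hab).le C.hb.le]

theorem expanding_left {x y : ℝ} (hx : x ∈ Icc 0 C.a) (hy : y ∈ Icc 0 C.a) :
    C.γ * |x - y| ≤ |C.k x - C.k y| :=
  mul_abs_sub_le_abs_sub_of_lt_abs_deriv (fun z hz => C.k_diff z (.inl hz))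
    (fun z hz => C.k_expand z (.inl hz)) hx hy

theorem expanding_right {x y : ℝ} (hx : x ∈ Icc C.b 1) (hy : y ∈ Icc C.b 1) :
    C.γ * |x - y| ≤ |C.k x - C.k y| :=
  mul_abs_sub_le_abs_sub_of_lt_abs_deriv (fun z hz => C.k_diff z (.inr hz))
    (fun z hz => C.k_expand z (.inr hz)) hx hy

theorem strictMonoOn_left : StrictMonoOn C.k (Icc 0 C.a) :=
  ContinuousOn.strictMonoOn_of_injOn_Icc C.ha.le (by rw [C.k0, C.ka]; exact zero_le_one)
    (fun x hx => (C.k_diff x (.inl hx)).continuousAt.continuousWithinAt)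
    (injOn_of_mul_abs_sub_le C.γ_pos fun _ hx _ hy => C.expanding_left hx hy)

theorem strictAntiOn_right : StrictAntiOn C.k (Icc C.b 1) :=
  ContinuousOn.strictAntiOn_of_injOn_Icc C.hb.le (by rw [C.k1, C.kb]; exact zero_le_one)
    (fun x hx => (C.k_diff x (.inr hx)).continuousAt.continuousWithinAt)
    (injOn_of_mul_abs_sub_le C.γ_pos fun _ hx _ hy => C.expanding_right hx hy)

theorem mapsTo_left : MapsTo C.k (Icc 0 C.a) (Icc 0 1) := by
  simpa only [C.k0, C.ka] using C.strictMonoOn_left.monotoneOn.mapsTo_Icc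

theorem mapsTo_right : MapsTo C.k (Icc C.b 1) (Icc 0 1) := by
  simpa only [C.k1, C.kb] using C.strictAntiOn_right.antitoneOn.mapsTo_Icc

theorem abs_Kp_sub_le {x y : ℝ} (hx : x ∈ Icc 0 1) (hy : y ∈ Icc 0 1) :
    |C.Kp x - C.Kp y| ≤ |x - y| / C.γ :=
  abs_sub_le_div_of_rightInvOn C.γ_pos (fun _ hx _ hy => C.expanding_left hx hy) C.Kp_mem
    C.Kp_right_inv hx hy

theorem abs_Km_sub_le {x y : ℝ} (hx : x ∈ Icc 0 1) (hy : y ∈ Icc 0 1) :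
    |C.Km x - C.Km y| ≤ |x - y| / C.γ :=
  abs_sub_le_div_of_rightInvOn C.γ_pos (fun _ hx _ hy => C.expanding_right hx hy) C.Km_mem
    C.Km_right_inv hx hy

theorem continuousOn_Kp : ContinuousOn C.Kp (Icc 0 1) :=
  continuousOn_of_abs_sub_le_div C.γ_pos fun _ hx _ hy => C.abs_Kp_sub_le hx hy

theorem continuousOn_Km : ContinuousOn C.Km (Icc 0 1) :=
  continuousOn_of_abs_sub_le_div C.γ_pos fun _ hx _ hy => C.abs_Km_sub_le hx hy

theorem strictMonoOn_Kp : StrictMonoOn C.Kp (Icc 0 1) := fun x hx y hy hxy =>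
  (C.strictMonoOn_left.lt_iff_lt (C.Kp_mem x hx) (C.Kp_mem y hy)).1 <| by
    rwa [C.Kp_right_inv x hx, C.Kp_right_inv y hy]

theorem strictAntiOn_Km : StrictAntiOn C.Km (Icc 0 1) := fun x hx y hy hxy =>
  (C.strictAntiOn_right.lt_iff_gt (C.Km_mem x hx) (C.Km_mem y hy)).1 <| by
    rwa [C.Km_right_inv x hx, C.Km_right_inv y hy]

theorem Kp_zero : C.Kp 0 = 0 := by
  simpa only [C.k0] using C.Kp_left_inv 0 (left_mem_Icc.2 C.ha.le)

theorem Kp_one : C.Kp 1 = C.a := by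
  simpa only [C.ka] using C.Kp_left_inv C.a (right_mem_Icc.2 C.ha.le)

theorem Km_zero : C.Km 0 = 1 := by
  simpa only [C.k1] using C.Km_left_inv 1 (right_mem_Icc.2 C.hb.le)

theorem Km_one : C.Km 1 = C.b := by
  simpa only [C.kb] using C.Km_left_inv C.b (left_mem_Icc.2 C.hb.le)

theorem cantorSet_subset : C.cantorSet ⊆ Icc 0 C.a ∪ Icc C.b 1 := fun _ hz =>
  mem_iInter.1 hz 0

theorem mapsTo_cantorSet : MapsTo C.k C.cantorSet C.cantorSet := fun z hz =>
  mem_iInter.2 fun n => by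
    simpa only [mem_preimage, Function.iterate_succ_apply] using mem_iInter.1 hz (n + 1)

end CantorMap

namespace Conjugating

variable {F G : CantorMap} {ψ ψ₁ ψ₂ : ℝ → ℝ}

theorem apply_eq_Kp_comp (h : Conjugating F G ψ) {z : ℝ} (hz : z ∈ Icc 0 F.a) :
    ψ z = G.Kp (ψ (F.k z)) := by
  rw [← h.2.2.2.1 _ (F.mapsTo_left hz), F.Kp_left_inv z hz]

theorem apply_eq_Km_comp (h : Conjugating F G ψ) {z : ℝ} (hz : z ∈ Icc F.b 1) :
    ψ z = G.Km (ψ (F.k z)) := by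
  rw [← h.2.2.2.2 _ (F.mapsTo_right hz), F.Km_left_inv z hz]

theorem abs_sub_le_abs_sub_comp_div (h₁ : Conjugating F G ψ₁) (h₂ : Conjugating F G ψ₂) {z : ℝ}
    (hz : z ∈ Icc 0 F.a ∪ Icc F.b 1) :
    |ψ₁ z - ψ₂ z| ≤ |ψ₁ (F.k z) - ψ₂ (F.k z)| / G.γ := by
  rcases hz with hz | hz
  · have hkz := F.mapsTo_left hz
    rw [h₁.apply_eq_Kp_comp hz, h₂.apply_eq_Kp_comp hz]
    exact G.abs_Kp_sub_le (h₁.2.2.1 hkz) (h₂.2.2.1 hkz)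
  · have hkz := F.mapsTo_right hz
    rw [h₁.apply_eq_Km_comp hz, h₂.apply_eq_Km_comp hz]
    exact G.abs_Km_sub_le (h₁.2.2.1 hkz) (h₂.2.2.1 hkz)

theorem abs_sub_le_inv_γ_pow (h₁ : Conjugating F G ψ₁) (h₂ : Conjugating F G ψ₂) (n : ℕ) :
    ∀ z ∈ F.cantorSet, |ψ₁ z - ψ₂ z| ≤ G.γ⁻¹ ^ n := by
  induction n with
  | zero =>
    intro z hz
    have hzI : z ∈ Icc (0 : ℝ) 1 :=
      union_subset F.Icc_zero_a_subset F.Icc_b_one_subset (F.cantorSet_subset hz)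
    rw [pow_zero, ← Real.dist_eq]
    exact Real.dist_le_of_mem_Icc_01 (h₁.2.2.1 hzI) (h₂.2.2.1 hzI)
  | succ n ih =>
    intro z hz
    calc |ψ₁ z - ψ₂ z| ≤ |ψ₁ (F.k z) - ψ₂ (F.k z)| / G.γ :=
          abs_sub_le_abs_sub_comp_div h₁ h₂ (F.cantorSet_subset hz)
      _ ≤ G.γ⁻¹ ^ n / G.γ := by
          gcongr
          · exact G.γ_pos.le
          · exact ih _ (F.mapsTo_cantorSet hz)
      _ = G.γ⁻¹ ^ (n + 1) := by rw [pow_succ, div_eq_mul_inv]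

theorem eqOn_cantorSet (h₁ : Conjugating F G ψ₁) (h₂ : Conjugating F G ψ₂) :
    EqOn ψ₁ ψ₂ F.cantorSet := fun z hz =>
  sub_eq_zero.1 <| abs_nonpos_iff.1 <| ge_of_tendsto G.tendsto_inv_γ_pow <|
    .of_forall fun n => abs_sub_le_inv_γ_pow h₁ h₂ n z hz

end Conjugating

namespace CantorMap

structure IsMonotoneSelfMap (f : ℝ → ℝ) : Prop where
  continuousOn : ContinuousOn f (Icc 0 1)
  monotoneOn : MonotoneOn f (Icc 0 1)
  mapsTo : MapsTo f (Icc 0 1) (Icc 0 1)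
  map_zero : f 0 = 0
  map_one : f 1 = 1

variable (F G : CantorMap)

noncomputable def gapMap (x : ℝ) : ℝ :=
  G.a + (x - F.a) * ((G.b - G.a) / (F.b - F.a))

theorem gapMap_a : gapMap F G F.a = G.a := by simp [gapMap]

theorem gapMap_b : gapMap F G F.b = G.b := by
  have : F.b - F.a ≠ 0 := (sub_pos.2 F.hab).ne'
  simp only [gapMap]
  field_simp
  ring

theorem strictMono_gapMap : StrictMono (gapMap F G) := fun x y hxy => by
  have : 0 < (G.b - G.a) / (F.b - F.a) := div_pos (sub_pos.2 G.hab) (sub_pos.2 F.hab)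
  simp only [gapMap]
  gcongr

theorem continuous_gapMap : Continuous (gapMap F G) := by
  unfold gapMap
  fun_prop

noncomputable def conjOp (f : ℝ → ℝ) (x : ℝ) : ℝ :=
  if x ≤ F.a then G.Kp (f (F.k x)) else if x < F.b then gapMap F G x else G.Km (f (F.k x))

variable {F G}

theorem conjOp_of_le_a (f : ℝ → ℝ) {x : ℝ} (hx : x ≤ F.a) : conjOp F G f x = G.Kp (f (F.k x)) :=
  if_pos hx

theorem conjOp_of_b_le (f : ℝ → ℝ) {x : ℝ} (hx : F.b ≤ x) : conjOp F G f x = G.Km (f (F.k x)) := by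
  rw [conjOp, if_neg (hx.trans_lt' F.hab).not_ge, if_neg hx.not_gt]

theorem conjOp_of_mem_gap {f : ℝ → ℝ} (hf : f 1 = 1) {x : ℝ} (hx : x ∈ Icc F.a F.b) :
    conjOp F G f x = gapMap F G x := by
  rcases hx.1.eq_or_lt with rfl | hax
  · rw [conjOp_of_le_a f le_rfl, F.ka, hf, G.Kp_one, gapMap_a]
  rcases hx.2.eq_or_lt with rfl | hxb
  · rw [conjOp_of_b_le f le_rfl, F.kb, hf, G.Km_one, gapMap_b]
  rw [conjOp, if_neg hax.not_ge, if_pos hxb]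

namespace IsMonotoneSelfMap

variable {f : ℝ → ℝ} (hf : IsMonotoneSelfMap f)
include hf

theorem continuousOn_conjOp : ContinuousOn (conjOp F G f) (Icc 0 1) := by
  have hleft : ContinuousOn (conjOp F G f) (Icc 0 F.a) :=
    (G.continuousOn_Kp.comp (hf.continuousOn.comp
      (fun x hx => (F.k_diff x (.inl hx)).continuousAt.continuousWithinAt) F.mapsTo_left)
      (hf.mapsTo.comp F.mapsTo_left)).congr fun x hx => conjOp_of_le_a f hx.2
  have hgap : ContinuousOn (conjOp F G f) (Icc F.a F.b) :=
    (continuous_gapMap F G).continuousOn.congr fun x hx => conjOp_of_mem_gap hf.map_one hx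
  have hright : ContinuousOn (conjOp F G f) (Icc F.b 1) :=
    (G.continuousOn_Km.comp (hf.continuousOn.comp
      (fun x hx => (F.k_diff x (.inr hx)).continuousAt.continuousWithinAt) F.mapsTo_right)
      (hf.mapsTo.comp F.mapsTo_right)).congr fun x hx => conjOp_of_b_le f hx.1
  rw [F.Icc_zero_one_eq_union]
  exact ((hleft.union_of_isClosed hgap isClosed_Icc isClosed_Icc).union_of_isClosed hright
    (isClosed_Icc.union isClosed_Icc) isClosed_Icc)

theorem monotoneOn_conjOp : MonotoneOn (conjOp F G f) (Icc 0 1) := by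
  have hleft : MonotoneOn (conjOp F G f) (Icc 0 F.a) := fun x hx y hy hxy => by
    rw [conjOp_of_le_a f hx.2, conjOp_of_le_a f hy.2]
    exact G.strictMonoOn_Kp.monotoneOn (hf.mapsTo (F.mapsTo_left hx))
      (hf.mapsTo (F.mapsTo_left hy)) (hf.monotoneOn (F.mapsTo_left hx) (F.mapsTo_left hy)
        (F.strictMonoOn_left.monotoneOn hx hy hxy))
  have hgap : MonotoneOn (conjOp F G f) (Icc F.a F.b) := fun x hx y hy hxy => by
    rw [conjOp_of_mem_gap hf.map_one hx, conjOp_of_mem_gap hf.map_one hy]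
    exact (strictMono_gapMap F G).monotone hxy
  have hright : MonotoneOn (conjOp F G f) (Icc F.b 1) := fun x hx y hy hxy => by
    rw [conjOp_of_b_le f hx.1, conjOp_of_b_le f hy.1]
    exact G.strictAntiOn_Km.antitoneOn (hf.mapsTo (F.mapsTo_right hy))
      (hf.mapsTo (F.mapsTo_right hx)) (hf.monotoneOn (F.mapsTo_right hy) (F.mapsTo_right hx)
        (F.strictAntiOn_right.antitoneOn hx hy hxy))
  rw [F.Icc_zero_one_eq_union]
  refine (hleft.union_right hgap (isGreatest_Icc F.ha.le) (isLeast_Icc F.hab.le)).union_right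
    hright ?_ (isLeast_Icc F.hb.le)
  rw [Icc_union_Icc_eq_Icc F.ha.le F.hab.le]
  exact isGreatest_Icc (F.ha.trans F.hab).le

theorem mapsTo_conjOp : MapsTo (conjOp F G f) (Icc 0 1) (Icc 0 1) := by
  have hleft : MapsTo (conjOp F G f) (Icc 0 F.a) (Icc 0 1) := fun x hx => by
    rw [conjOp_of_le_a f hx.2]
    exact G.Icc_zero_a_subset (G.Kp_mem _ (hf.mapsTo (F.mapsTo_left hx)))
  have hgap : MapsTo (conjOp F G f) (Icc F.a F.b) (Icc 0 1) := fun x hx => by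
    rw [conjOp_of_mem_gap hf.map_one hx]
    have := (strictMono_gapMap F G).monotone.mapsTo_Icc hx
    rw [gapMap_a, gapMap_b] at this
    exact Icc_subset_Icc G.ha.le G.hb.le this
  have hright : MapsTo (conjOp F G f) (Icc F.b 1) (Icc 0 1) := fun x hx => by
    rw [conjOp_of_b_le f hx.1]
    exact G.Icc_b_one_subset (G.Km_mem _ (hf.mapsTo (F.mapsTo_right hx)))
  have := (hleft.union hgap).union hright
  rwa [← F.Icc_zero_one_eq_union] at this

theorem conjOp : IsMonotoneSelfMap (conjOp F G f) where
  continuousOn := hf.continuousOn_conjOp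
  monotoneOn := hf.monotoneOn_conjOp
  mapsTo := hf.mapsTo_conjOp
  map_zero := by rw [conjOp_of_le_a f F.ha.le, F.k0, hf.map_zero, G.Kp_zero]
  map_one := by rw [conjOp_of_b_le f F.hb.le, F.k1, hf.map_zero, G.Km_zero]

end IsMonotoneSelfMap

theorem abs_conjOp_sub_le {f g : ℝ → ℝ} (hf : MapsTo f (Icc 0 1) (Icc 0 1))
    (hg : MapsTo g (Icc 0 1) (Icc 0 1)) {d : ℝ} (hd : ∀ y ∈ Icc (0 : ℝ) 1, |f y - g y| ≤ d)
    {x : ℝ} (hx : x ∈ Icc 0 1) : |conjOp F G f x - conjOp F G g x| ≤ d / G.γ := by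
  have hd0 : 0 ≤ d := (abs_nonneg _).trans (hd 0 (left_mem_Icc.2 zero_le_one))
  by_cases hxa : x ≤ F.a
  · have hkx := F.mapsTo_left ⟨hx.1, hxa⟩
    rw [conjOp_of_le_a f hxa, conjOp_of_le_a g hxa]
    exact (G.abs_Kp_sub_le (hf hkx) (hg hkx)).trans (by gcongr; exacts [G.γ_pos.le, hd _ hkx])
  by_cases hxb : x < F.b
  · rw [conjOp, conjOp, if_neg hxa, if_pos hxb, if_neg hxa, if_pos hxb, sub_self, abs_zero]
    exact div_nonneg hd0 G.γ_pos.le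
  · have hkx := F.mapsTo_right ⟨not_lt.1 hxb, hx.2⟩
    rw [conjOp_of_b_le f (not_lt.1 hxb), conjOp_of_b_le g (not_lt.1 hxb)]
    exact (G.abs_Km_sub_le (hf hkx) (hg hkx)).trans (by gcongr; exacts [G.γ_pos.le, hd _ hkx])

end CantorMap

namespace CantorMap

variable (F G : CantorMap)

noncomputable def conjApprox (n : ℕ) : ℝ → ℝ := (conjOp F G)^[n] id

noncomputable def conjugacy (x : ℝ) : ℝ := limUnder atTop (conjApprox F G · x)

variable {F G}

theorem conjApprox_succ (n : ℕ) : conjApprox F G (n + 1) = conjOp F G (conjApprox F G n) :=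
  Function.iterate_succ_apply' _ _ _

theorem isMonotoneSelfMap_conjApprox (n : ℕ) : IsMonotoneSelfMap (conjApprox F G n) := by
  induction n with
  | zero => exact ⟨continuousOn_id, monotoneOn_id, mapsTo_id _, rfl, rfl⟩
  | succ n ih => rw [conjApprox_succ]; exact ih.conjOp

theorem abs_conjApprox_succ_sub_le (n : ℕ) {x : ℝ} (hx : x ∈ Icc 0 1) :
    |conjApprox F G (n + 1) x - conjApprox F G n x| ≤ G.γ⁻¹ ^ n := by
  induction n generalizing x with
  | zero =>
    rw [pow_zero, ← Real.dist_eq]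
    exact Real.dist_le_of_mem_Icc_01 ((isMonotoneSelfMap_conjApprox 1).mapsTo hx)
      ((isMonotoneSelfMap_conjApprox 0).mapsTo hx)
  | succ n ih =>
    have := abs_conjOp_sub_le (F := F) (G := G) (isMonotoneSelfMap_conjApprox (n + 1)).mapsTo
      (isMonotoneSelfMap_conjApprox n).mapsTo (fun y hy => ih hy) hx
    rwa [← conjApprox_succ, ← conjApprox_succ, div_eq_mul_inv, ← pow_succ] at this

theorem dist_conjApprox_succ_le {x : ℝ} (hx : x ∈ Icc 0 1) (n : ℕ) :
    dist (conjApprox F G n x) (conjApprox F G (n + 1) x) ≤ 1 * G.γ⁻¹ ^ n := by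
  rw [Real.dist_eq, abs_sub_comm, one_mul]
  exact abs_conjApprox_succ_sub_le n hx

theorem tendsto_conjApprox {x : ℝ} (hx : x ∈ Icc 0 1) :
    Tendsto (conjApprox F G · x) atTop (𝓝 (conjugacy F G x)) :=
  (cauchySeq_of_le_geometric _ 1 (inv_lt_one_of_one_lt₀ G.hγ)
    (dist_conjApprox_succ_le hx)).tendsto_limUnder

theorem abs_conjApprox_sub_conjugacy_le (n : ℕ) {x : ℝ} (hx : x ∈ Icc 0 1) :
    |conjApprox F G n x - conjugacy F G x| ≤ G.γ⁻¹ ^ n / (1 - G.γ⁻¹) := by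
  rw [← Real.dist_eq, ← one_mul (G.γ⁻¹ ^ n)]
  exact dist_le_of_le_geometric_of_tendsto _ 1 (inv_lt_one_of_one_lt₀ G.hγ)
    (dist_conjApprox_succ_le hx) (tendsto_conjApprox hx) n

theorem tendstoUniformlyOn_conjApprox :
    TendstoUniformlyOn (conjApprox F G) (conjugacy F G) atTop (Icc 0 1) := by
  rw [Metric.tendstoUniformlyOn_iff]
  intro ε hε
  filter_upwards [G.tendsto_inv_γ_pow_div.eventually (gt_mem_nhds hε)] with n hn x hx
  rw [dist_comm, Real.dist_eq]
  exact (abs_conjApprox_sub_conjugacy_le n hx).trans_lt hn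

theorem isMonotoneSelfMap_conjugacy : IsMonotoneSelfMap (conjugacy F G) where
  continuousOn := tendstoUniformlyOn_conjApprox.continuousOn
    (.of_forall fun n => (isMonotoneSelfMap_conjApprox n).continuousOn)
  monotoneOn x hx y hy hxy := le_of_tendsto_of_tendsto' (tendsto_conjApprox hx)
    (tendsto_conjApprox hy) fun n => (isMonotoneSelfMap_conjApprox n).monotoneOn hx hy hxy
  mapsTo x hx := isClosed_Icc.mem_of_tendsto (tendsto_conjApprox hx)
    (.of_forall fun n => (isMonotoneSelfMap_conjApprox n).mapsTo hx)
  map_zero := tendsto_nhds_unique (tendsto_conjApprox (left_mem_Icc.2 zero_le_one))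
    (by simp only [fun n => (isMonotoneSelfMap_conjApprox (F := F) (G := G) n).map_zero,
      tendsto_const_nhds])
  map_one := tendsto_nhds_unique (tendsto_conjApprox (right_mem_Icc.2 zero_le_one))
    (by simp only [fun n => (isMonotoneSelfMap_conjApprox (F := F) (G := G) n).map_one,
      tendsto_const_nhds])

theorem eqOn_conjOp_conjugacy : EqOn (conjOp F G (conjugacy F G)) (conjugacy F G) (Icc 0 1) := by
  intro x hx
  have hclose : Tendsto (conjApprox F G · x) atTop (𝓝 (conjOp F G (conjugacy F G) x)) := by
    refine (tendsto_add_atTop_iff_nat 1).1 ?_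
    rw [tendsto_iff_dist_tendsto_zero]
    have herr := G.tendsto_inv_γ_pow_div.div_const G.γ
    rw [zero_div] at herr
    refine squeeze_zero (fun _ => dist_nonneg) (fun n => ?_) herr
    rw [Real.dist_eq, conjApprox_succ]
    exact abs_conjOp_sub_le (isMonotoneSelfMap_conjApprox n).mapsTo
      isMonotoneSelfMap_conjugacy.mapsTo (fun y hy => abs_conjApprox_sub_conjugacy_le n hy) hx
  exact tendsto_nhds_unique hclose (tendsto_conjApprox hx)

end CantorMap

namespace CantorMap

variable {F G : CantorMap} {ψ : ℝ → ℝ}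

theorem lt_of_lt_b_of_a_lt (hψ : IsMonotoneSelfMap ψ) (hfix : EqOn (conjOp F G ψ) ψ (Icc 0 1))
    {x y : ℝ} (hx : x ∈ Icc 0 1) (hy : y ∈ Icc 0 1) (hxy : x < y) (hxb : x < F.b)
    (hay : F.a < y) : ψ x < ψ y := by
  have hgap : ∀ z ∈ Icc F.a F.b, ψ z = gapMap F G z := fun z hz =>
    (hfix (F.Icc_a_b_subset hz)).symm.trans (conjOp_of_mem_gap hψ.map_one hz)
  have hx' : max x F.a ∈ Icc F.a F.b := ⟨le_max_right _ _, max_le hxb.le F.hab.le⟩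
  have hy' : min y F.b ∈ Icc F.a F.b := ⟨le_min hay.le F.hab.le, min_le_right _ _⟩
  calc ψ x ≤ ψ (max x F.a) := hψ.monotoneOn hx (F.Icc_a_b_subset hx') (le_max_left _ _)
    _ = gapMap F G (max x F.a) := hgap _ hx'
    _ < gapMap F G (min y F.b) :=
        strictMono_gapMap F G (max_lt (lt_min hxy hxb) (lt_min hay F.hab))
    _ = ψ (min y F.b) := (hgap _ hy').symm
    _ ≤ ψ y := hψ.monotoneOn (F.Icc_a_b_subset hy') hy (min_le_left _ _)

theorem ne_of_one_lt_γ_pow_mul_abs_sub (hψ : IsMonotoneSelfMap ψ)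
    (hfix : EqOn (conjOp F G ψ) ψ (Icc 0 1)) (n : ℕ) :
    ∀ x ∈ Icc (0 : ℝ) 1, ∀ y ∈ Icc (0 : ℝ) 1, 1 < F.γ ^ n * |x - y| → ψ x ≠ ψ y := by
  induction n with
  | zero =>
    intro x hx y hy h
    rw [pow_zero, one_mul, ← Real.dist_eq] at h
    exact absurd (Real.dist_le_of_mem_Icc_01 hx hy) h.not_ge
  | succ n ih =>
    intro x hx y hy h
    have hscale {x' y' : ℝ} (hle : F.γ * |x - y| ≤ |x' - y'|) : 1 < F.γ ^ n * |x' - y'| :=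
      h.trans_le (by rw [pow_succ, mul_assoc]; gcongr; exact pow_nonneg F.γ_pos.le n)
    by_cases hl : x ≤ F.a ∧ y ≤ F.a
    · have hx' : x ∈ Icc 0 F.a := ⟨hx.1, hl.1⟩
      have hy' : y ∈ Icc 0 F.a := ⟨hy.1, hl.2⟩
      rw [← hfix hx, ← hfix hy, conjOp_of_le_a ψ hl.1, conjOp_of_le_a ψ hl.2]
      exact G.strictMonoOn_Kp.injOn.ne (hψ.mapsTo (F.mapsTo_left hx'))
        (hψ.mapsTo (F.mapsTo_left hy'))
        (ih _ (F.mapsTo_left hx') _ (F.mapsTo_left hy') (hscale (F.expanding_left hx' hy')))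
    by_cases hr : F.b ≤ x ∧ F.b ≤ y
    · have hx' : x ∈ Icc F.b 1 := ⟨hr.1, hx.2⟩
      have hy' : y ∈ Icc F.b 1 := ⟨hr.2, hy.2⟩
      rw [← hfix hx, ← hfix hy, conjOp_of_b_le ψ hr.1, conjOp_of_b_le ψ hr.2]
      exact G.strictAntiOn_Km.injOn.ne (hψ.mapsTo (F.mapsTo_right hx'))
        (hψ.mapsTo (F.mapsTo_right hy'))
        (ih _ (F.mapsTo_right hx') _ (F.mapsTo_right hy') (hscale (F.expanding_right hx' hy')))
    have hne : x ≠ y := by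
      rintro rfl
      norm_num at h
    rcases hne.lt_or_gt with hxy | hyx
    · exact (lt_of_lt_b_of_a_lt hψ hfix hx hy hxy
        (lt_of_not_ge fun hbx => hr ⟨hbx, hbx.trans hxy.le⟩)
        (lt_of_not_ge fun hya => hl ⟨hxy.le.trans hya, hya⟩)).ne
    · exact (lt_of_lt_b_of_a_lt hψ hfix hy hx hyx
        (lt_of_not_ge fun hby => hr ⟨hby.trans hyx.le, hby⟩)
        (lt_of_not_ge fun hxa => hl ⟨hxa, hyx.le.trans hxa⟩)).ne'

theorem strictMonoOn_of_eqOn_conjOp (hψ : IsMonotoneSelfMap ψ)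
    (hfix : EqOn (conjOp F G ψ) ψ (Icc 0 1)) : StrictMonoOn ψ (Icc 0 1) :=
  hψ.monotoneOn.strictMonoOn_of_injOn fun x hx y hy hψxy => by
    by_contra hne
    obtain ⟨n, hn⟩ := pow_unbounded_of_one_lt |x - y|⁻¹ F.hγ
    exact ne_of_one_lt_γ_pow_mul_abs_sub hψ hfix n x hx y hy
      ((inv_lt_iff_one_lt_mul₀ (abs_pos.2 (sub_ne_zero.2 hne))).1 hn) hψxy

theorem conjugating_conjugacy : Conjugating F G (conjugacy F G) := by
  have hψ : IsMonotoneSelfMap (conjugacy F G) := isMonotoneSelfMap_conjugacy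
  refine ⟨hψ.continuousOn, strictMonoOn_of_eqOn_conjOp hψ eqOn_conjOp_conjugacy, hψ.mapsTo,
    fun y hy => ?_, fun y hy => ?_⟩
  · have hKp := F.Kp_mem y hy
    rw [← eqOn_conjOp_conjugacy (F.Icc_zero_a_subset hKp), conjOp_of_le_a _ hKp.2,
      F.Kp_right_inv y hy]
  · have hKm := F.Km_mem y hy
    rw [← eqOn_conjOp_conjugacy (F.Icc_b_one_subset hKm), conjOp_of_b_le _ hKm.1,
      F.Km_right_inv y hy]

end CantorMap

/-- There exists a strictly increasing continuous map `ψ : [0,1] → [0,1]` with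
`ψ ∘ K^F_± = K^G_± ∘ ψ`; moreover the restriction of such a map to the Cantor set
of `k_F` is uniquely determined. -/
theorem cantor_conjugacy (F G : CantorMap) :
    (∃ ψ : ℝ → ℝ, Conjugating F G ψ) ∧
    ∀ ψ₁ ψ₂ : ℝ → ℝ, Conjugating F G ψ₁ → Conjugating F G ψ₂ →
      EqOn ψ₁ ψ₂ F.cantorSet :=
  ⟨⟨_, CantorMap.conjugating_conjugacy⟩, fun _ _ => Conjugating.eqOn_cantorSet⟩
end

section
/- Let (f(y))_{y∈[0,1]} be a continuous family of unimodal maps of [-1,1] with common turning point 0 (continuity meaning (x,y) ↦ f(y)(x) is continuous). Fix y ∈ [0,1], a sign j ∈ {-,+}, and ε > 0. Then there exists δ > 0 such that for all y' ∈ [0,1] and x, x' ∈ [-1,1] with |y−y'| < δ and |x−x'| < δ, if x lies in the image of the branch f_j(y) and x' lies in the image of f_j(y'), then |f_j(y)^{-1}(x) − f_j(y')^{-1}(x')| < ε. -/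
open Set Filter Topology

/-- Uniform continuity of the inverse branches of a continuous family of unimodal
maps: given `y`, a branch `j` (`j = false` is the increasing branch on `[-1,0]`,
`j = true` the decreasing branch on `[0,1]`) and `ε > 0`, there is `δ > 0` such
that whenever `|y - y'| < δ`, `|x - x'| < δ`, and `x`, `x'` lie in the images of
the branches `f_j(y)`, `f_j(y')` respectively, the corresponding preimages are
`ε`-close. -/
theorem inverse_branch_uniform_continuity (f : ℝ → ℝ → ℝ)
    (hcont : Continuous fun p : ℝ × ℝ => f p.1 p.2)
    (hmaps : ∀ y ∈ Icc (0:ℝ) 1, MapsTo (f y) (Icc (-1:ℝ) 1) (Icc (-1:ℝ) 1))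
    (hleft : ∀ y ∈ Icc (0:ℝ) 1, f y (-1) = -1)
    (hright : ∀ y ∈ Icc (0:ℝ) 1, f y 1 = -1)
    (hmono : ∀ y ∈ Icc (0:ℝ) 1, StrictMonoOn (f y) (Icc (-1:ℝ) 0))
    (hanti : ∀ y ∈ Icc (0:ℝ) 1, StrictAntiOn (f y) (Icc (0:ℝ) 1))
    (y : ℝ) (hy : y ∈ Icc (0:ℝ) 1) (j : Bool) (ε : ℝ) (hε : 0 < ε) :
    ∃ δ > 0, ∀ y' ∈ Icc (0:ℝ) 1, ∀ x ∈ Icc (-1:ℝ) 1, ∀ x' ∈ Icc (-1:ℝ) 1,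
      |y - y'| < δ → |x - x'| < δ →
      ∀ u ∈ (if j then Icc (0:ℝ) 1 else Icc (-1:ℝ) 0),
      ∀ u' ∈ (if j then Icc (0:ℝ) 1 else Icc (-1:ℝ) 0),
        f y u = x → f y' u' = x' → |u - u'| < ε := by
  set D : Set ℝ := if j then Icc (0:ℝ) 1 else Icc (-1:ℝ) 0 with hD
  have hDcomp : IsCompact D := by
    cases j <;> simp only [hD, if_true, if_false, Bool.false_eq_true] <;> exact isCompact_Icc
  have hDsub : D ⊆ Icc (-1:ℝ) 1 := by
    cases j <;> simp only [hD, if_true, if_false, Bool.false_eq_true] <;>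
      intro z hz <;> exact ⟨by linarith [hz.1, hz.2], by linarith [hz.1, hz.2]⟩
  have hinj : InjOn (f y) D := by
    cases j
    · simpa only [hD, Bool.false_eq_true, if_false] using (hmono y hy).injOn
    · simpa only [hD, if_true] using (hanti y hy).injOn
  have hfy : Continuous (f y) := hcont.comp (Continuous.prodMk_right y)
  -- Step 1: modulus of continuity for the inverse of `f y` on the branch `D`.
  have step1 : ∃ η > 0, ∀ u ∈ D, ∀ u' ∈ D, |f y u - f y u'| < η → |u - u'| < ε := by
    set K : Set (ℝ × ℝ) := (D ×ˢ D) ∩ {p : ℝ × ℝ | ε ≤ |p.1 - p.2|} with hK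
    have hKcomp : IsCompact K := (hDcomp.prod hDcomp).inter_right
      (isClosed_le continuous_const ((continuous_fst.sub continuous_snd).abs))
    have hφ : Continuous fun p : ℝ × ℝ => |f y p.1 - f y p.2| :=
      ((hfy.comp continuous_fst).sub (hfy.comp continuous_snd)).abs
    by_cases hne : K.Nonempty
    · obtain ⟨p₀, hp₀K, hp₀min⟩ := hKcomp.exists_isMinOn hne hφ.continuousOn
      refine ⟨|f y p₀.1 - f y p₀.2|, ?_, ?_⟩
      · have hne12 : p₀.1 ≠ p₀.2 := by
          intro h
          have := hp₀K.2
          simp only [mem_setOf_eq, h, sub_self, abs_zero] at this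
          linarith
        have : f y p₀.1 ≠ f y p₀.2 := fun h =>
          hne12 (hinj hp₀K.1.1 hp₀K.1.2 h)
        exact abs_pos.mpr (sub_ne_zero.mpr this)
      · intro u hu u' hu' hlt
        by_contra hge
        push_neg at hge
        have hmem : (u, u') ∈ K := ⟨⟨hu, hu'⟩, hge⟩
        exact absurd (hp₀min hmem) (not_le.mpr hlt)
    · refine ⟨1, one_pos, fun u hu u' hu' _ => ?_⟩
      by_contra hge
      push_neg at hge
      exact hne ⟨(u, u'), ⟨hu, hu'⟩, hge⟩
  obtain ⟨η, hη, hηspec⟩ := step1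
  -- Step 2: uniform continuity of the family on the compact square.
  have hucf : UniformContinuousOn (fun p : ℝ × ℝ => f p.1 p.2)
      (Icc (0:ℝ) 1 ×ˢ Icc (-1:ℝ) 1) :=
    (isCompact_Icc.prod isCompact_Icc).uniformContinuousOn_of_continuous hcont.continuousOn
  obtain ⟨δ₁, hδ₁, hδ₁spec⟩ := Metric.uniformContinuousOn_iff.mp hucf (η/2) (by positivity)
  refine ⟨min δ₁ (η/2), lt_min hδ₁ (by positivity), ?_⟩
  intro y' hy' x hx x' hx' hyy' hxx' u hu u' hu' hfu hfu'
  have hu'D : u' ∈ D := hu'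
  have huD : u ∈ D := hu
  have h1 : |f y u' - f y' u'| < η/2 := by
    have hmem1 : (y, u') ∈ Icc (0:ℝ) 1 ×ˢ Icc (-1:ℝ) 1 := ⟨hy, hDsub hu'D⟩
    have hmem2 : (y', u') ∈ Icc (0:ℝ) 1 ×ˢ Icc (-1:ℝ) 1 := ⟨hy', hDsub hu'D⟩
    have hdist : dist ((y, u') : ℝ × ℝ) (y', u') < δ₁ := by
      rw [Prod.dist_eq]
      simp only [Real.dist_eq, sub_self, abs_zero]
      exact max_lt (lt_of_lt_of_le hyy' (min_le_left _ _)) hδ₁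
    have := hδ₁spec _ hmem1 _ hmem2 hdist
    simpa [Real.dist_eq] using this
  have h2 : |f y u - f y u'| < η := by
    have : |f y u - f y u'| ≤ |f y u - f y' u'| + |f y u' - f y' u'| := by
      have := abs_sub_abs_le_abs_sub (f y u - f y' u') (f y u' - f y' u')
      calc |f y u - f y u'| = |(f y u - f y' u') - (f y u' - f y' u')| := by ring_nf
        _ ≤ |f y u - f y' u'| + |f y u' - f y' u'| := abs_sub _ _
    have hxx : |f y u - f y' u'| < η/2 := by
      rw [hfu, hfu']
      exact lt_of_lt_of_le hxx' (min_le_right _ _)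
    linarith
  exact hηspec u huD u' hu'D h2
end

section
/- With notation as in the continuity lemma for inverse branches: define ξ_j(x,y) = f_j(y)^{-1}(x) if x ∈ Im(f_j(y)) and ξ_j(x,y) = 0 otherwise (j ∈ {-,+}, where f_-(y), f_+(y) are the increasing and decreasing branches of the unimodal map f(y)). Then ξ_- and ξ_+ are continuous on their domains. -/
open Set Filter Topology

private lemma xi_aux (f : ℝ → ℝ → ℝ)
    (hcont : Continuous fun p : ℝ × ℝ => f p.1 p.2)
    (hleft : ∀ y ∈ Icc (0:ℝ) 1, f y (-1) = -1)
    (hmono : ∀ y ∈ Icc (0:ℝ) 1, StrictMonoOn (f y) (Icc (-1:ℝ) 0))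
    (ξ : ℝ → ℝ → ℝ)
    (hξ : ∀ x ∈ Icc (-1:ℝ) 1, ∀ y ∈ Icc (0:ℝ) 1,
      ((∃ u ∈ Icc (-1:ℝ) 0, f y u = x) → ξ x y ∈ Icc (-1:ℝ) 0 ∧ f y (ξ x y) = x) ∧
      ((¬ ∃ u ∈ Icc (-1:ℝ) 0, f y u = x) → ξ x y = 0)) :
    ContinuousOn (fun p : ℝ × ℝ => ξ p.1 p.2) (Icc (-1:ℝ) 1 ×ˢ Icc (0:ℝ) 1) := by
  set D := Icc (-1:ℝ) 1 ×ˢ Icc (0:ℝ) 1 with hD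
  have hfy : ∀ y : ℝ, Continuous (f y) := fun y =>
    hcont.comp (Continuous.prodMk_right y)
  have key : ∀ x ∈ Icc (-1:ℝ) 1, ∀ y ∈ Icc (0:ℝ) 1,
      ξ x y ∈ Icc (-1:ℝ) 0 ∧ f y (ξ x y) = min x (f y 0) := by
    intro x hx y hy
    by_cases h : x ≤ f y 0
    · have hex : ∃ u ∈ Icc (-1:ℝ) 0, f y u = x := by
        have hiv := intermediate_value_Icc (by norm_num : (-1:ℝ) ≤ 0) (hfy y).continuousOn
        have hxmem : x ∈ Icc (f y (-1)) (f y 0) := by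
          rw [hleft y hy]; exact ⟨hx.1, h⟩
        obtain ⟨u, hu, hu'⟩ := hiv hxmem
        exact ⟨u, hu, hu'⟩
      obtain ⟨h1, h2⟩ := (hξ x hx y hy).1 hex
      exact ⟨h1, by rw [h2, min_eq_left h]⟩
    · have hne : ¬ ∃ u ∈ Icc (-1:ℝ) 0, f y u = x := by
        rintro ⟨u, hu, rfl⟩
        exact h ((hmono y hy).monotoneOn hu (by norm_num) hu.2)
      have h0 := (hξ x hx y hy).2 hne
      refine ⟨by rw [h0]; exact ⟨by norm_num, le_refl 0⟩, ?_⟩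
      rw [h0, min_eq_right (le_of_not_ge h)]
  rintro ⟨x₀, y₀⟩ hp₀
  obtain ⟨hx₀, hy₀⟩ := hp₀
  have hp₀ : (x₀, y₀) ∈ D := ⟨hx₀, hy₀⟩
  have hkey₀ := key x₀ hx₀ y₀ hy₀
  rw [ContinuousWithinAt, tendsto_iff_seq_tendsto]
  intro q hq
  have hq' : Tendsto q atTop (𝓝 (x₀, y₀)) := hq.mono_right nhdsWithin_le_nhds
  have hqD : ∀ᶠ n in atTop, q n ∈ D := hq self_mem_nhdsWithin
  set r : ℕ → ℝ × ℝ := fun n => if q n ∈ D then q n else (x₀, y₀) with hr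
  have hrD : ∀ n, r n ∈ D := by
    intro n; by_cases h : q n ∈ D <;> simp [hr, h, hp₀]
  have hrq : r =ᶠ[atTop] q := hqD.mono fun n h => by simp [hr, h]
  have hr' : Tendsto r atTop (𝓝 (x₀, y₀)) := hq'.congr' hrq.symm
  have main : Tendsto (fun n => ξ (r n).1 (r n).2) atTop (𝓝 (ξ x₀ y₀)) := by
    apply tendsto_of_subseq_tendsto
    intro ns hns
    have hsub : ∀ n, ξ (r (ns n)).1 (r (ns n)).2 ∈ Icc (-1:ℝ) 0 := fun n =>
      (key _ (hrD (ns n)).1 _ (hrD (ns n)).2).1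
    obtain ⟨v, hv, φ, hφ, hvt⟩ := isCompact_Icc.tendsto_subseq hsub
    refine ⟨φ, ?_⟩
    have hrt : Tendsto (fun k => r (ns (φ k))) atTop (𝓝 (x₀, y₀)) :=
      hr'.comp (hns.comp hφ.tendsto_atTop)
    have hyt : Tendsto (fun k => (r (ns (φ k))).2) atTop (𝓝 y₀) :=
      (continuous_snd.tendsto _).comp hrt
    have hxt : Tendsto (fun k => (r (ns (φ k))).1) atTop (𝓝 x₀) :=
      (continuous_fst.tendsto _).comp hrt
    have heq : ∀ k, f (r (ns (φ k))).2 (ξ (r (ns (φ k))).1 (r (ns (φ k))).2)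
        = min (r (ns (φ k))).1 (f (r (ns (φ k))).2 0) := fun k =>
      (key _ (hrD _).1 _ (hrD _).2).2
    have hL : Tendsto (fun k => f (r (ns (φ k))).2 (ξ (r (ns (φ k))).1 (r (ns (φ k))).2))
        atTop (𝓝 (f y₀ v)) :=
      (hcont.tendsto (y₀, v)).comp (hyt.prodMk_nhds hvt)
    have hR : Tendsto (fun k => min (r (ns (φ k))).1 (f (r (ns (φ k))).2 0))
        atTop (𝓝 (min x₀ (f y₀ 0))) :=
      hxt.min ((hcont.tendsto (y₀, 0)).comp (hyt.prodMk_nhds tendsto_const_nhds))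
    have hfv : f y₀ v = min x₀ (f y₀ 0) :=
      tendsto_nhds_unique (hL.congr heq) hR
    have hveq : v = ξ x₀ y₀ := by
      apply (hmono y₀ hy₀).injOn hv hkey₀.1
      rw [hfv, hkey₀.2]
    rw [hveq] at hvt
    exact hvt
  exact main.congr' (hrq.mono fun n h => by simp only [Function.comp_apply]; rw [h])

/-- Continuity of the extended inverse branches `ξ_j`: for a continuous family of
unimodal maps `f(y)` (`j = false` is the increasing branch on `[-1,0]`, `j = true`
the decreasing branch on `[0,1]`), any function `ξ` with `ξ(x,y) = f_j(y)⁻¹(x)`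
when `x ∈ Im(f_j(y))` and `ξ(x,y) = 0` (the turning point) otherwise is
continuous on `[-1,1] × [0,1]`. -/
theorem xi_continuous (f : ℝ → ℝ → ℝ)
    (hcont : Continuous fun p : ℝ × ℝ => f p.1 p.2)
    (hmaps : ∀ y ∈ Icc (0:ℝ) 1, MapsTo (f y) (Icc (-1:ℝ) 1) (Icc (-1:ℝ) 1))
    (hleft : ∀ y ∈ Icc (0:ℝ) 1, f y (-1) = -1)
    (hright : ∀ y ∈ Icc (0:ℝ) 1, f y 1 = -1)
    (hmono : ∀ y ∈ Icc (0:ℝ) 1, StrictMonoOn (f y) (Icc (-1:ℝ) 0))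
    (hanti : ∀ y ∈ Icc (0:ℝ) 1, StrictAntiOn (f y) (Icc (0:ℝ) 1))
    (j : Bool) (ξ : ℝ → ℝ → ℝ)
    (hξ : ∀ x ∈ Icc (-1:ℝ) 1, ∀ y ∈ Icc (0:ℝ) 1,
      ((∃ u ∈ (if j then Icc (0:ℝ) 1 else Icc (-1:ℝ) 0), f y u = x) →
        ξ x y ∈ (if j then Icc (0:ℝ) 1 else Icc (-1:ℝ) 0) ∧ f y (ξ x y) = x) ∧
      ((¬ ∃ u ∈ (if j then Icc (0:ℝ) 1 else Icc (-1:ℝ) 0), f y u = x) → ξ x y = 0)) :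
    ContinuousOn (fun p : ℝ × ℝ => ξ p.1 p.2) (Icc (-1:ℝ) 1 ×ˢ Icc (0:ℝ) 1) := by
  cases j with
  | false =>
    simp only [Bool.false_eq_true, if_false] at hξ
    exact xi_aux f hcont hleft hmono ξ hξ
  | true =>
    simp only [if_true] at hξ
    set f' : ℝ → ℝ → ℝ := fun y u => f y (-u) with hf'
    set ξ' : ℝ → ℝ → ℝ := fun x y => -(ξ x y) with hξ'def
    have hcont' : Continuous fun p : ℝ × ℝ => f' p.1 p.2 :=
      hcont.comp (continuous_fst.prodMk continuous_snd.neg)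
    have hleft' : ∀ y ∈ Icc (0:ℝ) 1, f' y (-1) = -1 := by
      intro y hy; show f y (-(-1)) = -1; rw [neg_neg]; exact hright y hy
    have hmono' : ∀ y ∈ Icc (0:ℝ) 1, StrictMonoOn (f' y) (Icc (-1:ℝ) 0) := by
      intro y hy a ha b hb hab
      exact hanti y hy ⟨by linarith [hb.2], by linarith [hb.1]⟩
        ⟨by linarith [ha.2], by linarith [ha.1]⟩ (by linarith)
    have hξ'' : ∀ x ∈ Icc (-1:ℝ) 1, ∀ y ∈ Icc (0:ℝ) 1,
        ((∃ u ∈ Icc (-1:ℝ) 0, f' y u = x) → ξ' x y ∈ Icc (-1:ℝ) 0 ∧ f' y (ξ' x y) = x) ∧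
        ((¬ ∃ u ∈ Icc (-1:ℝ) 0, f' y u = x) → ξ' x y = 0) := by
      intro x hx y hy
      constructor
      · rintro ⟨u, hu, hfu⟩
        have hex : ∃ w ∈ Icc (0:ℝ) 1, f y w = x :=
          ⟨-u, ⟨by linarith [hu.2], by linarith [hu.1]⟩, hfu⟩
        obtain ⟨h1, h2⟩ := (hξ x hx y hy).1 hex
        refine ⟨⟨?_, ?_⟩, ?_⟩
        · show (-1:ℝ) ≤ -(ξ x y); linarith [h1.2]
        · show -(ξ x y) ≤ 0; linarith [h1.1]
        · show f y (-(-(ξ x y))) = x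
          rw [neg_neg]; exact h2
      · intro hne
        have hne' : ¬ ∃ w ∈ Icc (0:ℝ) 1, f y w = x := by
          rintro ⟨w, hw, hfw⟩
          exact hne ⟨-w, ⟨by linarith [hw.2], by linarith [hw.1]⟩, by
            show f y (-(-w)) = x; rw [neg_neg]; exact hfw⟩
        have := (hξ x hx y hy).2 hne'
        show -(ξ x y) = 0
        rw [this, neg_zero]
    have H := xi_aux f' hcont' hleft' hmono' ξ' hξ''
    have H' := H.neg
    have hfun : (fun p : ℝ × ℝ => ξ p.1 p.2) = fun p : ℝ × ℝ => -ξ' p.1 p.2 := by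
      funext p; simp [hξ'def]
    rw [hfun]; exact H'
end

section
/- Let g : [a,b] → [a,b] be a C^3 map with negative Schwarzian derivative, g(a) = a, g(b) = b, g'(x) > 0 for all x ∈ [a,b], g'(a) ≥ 1 and g'(b) ≥ 1, and a < b. Then g has no fixed point p ∈ (a,b) with a neighborhood attracted to p; in fact g'(x) > 1 for all x ∈ (a,b), so |g(x) − g(y)| > |x − y| for distinct x, y, contradicting g([a,b]) = [a,b] unless a = b. -/
open Set Filter Topology

/-- Second derivative test (necessary condition): at a local minimum of a
differentiable function, the second derivative (if it exists) is nonnegative. -/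
lemma second_deriv_nonneg_of_isLocalMin {f : ℝ → ℝ} {x₀ L : ℝ}
    (hf : Differentiable ℝ f) (hmin : IsLocalMin f x₀)
    (hL : HasDerivAt (deriv f) L x₀) : 0 ≤ L := by
  have hz : deriv f x₀ = 0 := hmin.deriv_eq_zero
  have hslope : Tendsto (slope (deriv f) x₀) (𝓝[>] x₀) (𝓝 L) :=
    (hasDerivAt_iff_tendsto_slope.mp hL).mono_left
      (nhdsWithin_mono _ (fun x hx => ne_of_gt hx))
  have hfreq : ∃ᶠ x in 𝓝[>] x₀, 0 ≤ slope (deriv f) x₀ x := by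
    rw [(nhdsGT_basis x₀).frequently_iff]
    intro u hu
    obtain ⟨δ, hδ, hδmin⟩ := Metric.eventually_nhds_iff.mp hmin
    set x₁ : ℝ := min u (x₀ + δ / 2) with hx₁
    have hx₀x₁ : x₀ < x₁ := lt_min hu (by linarith)
    obtain ⟨ξ, hξ, hξs⟩ := exists_deriv_eq_slope f hx₀x₁
      (hf.continuous.continuousOn) (hf.differentiableOn)
    refine ⟨ξ, ⟨hξ.1, lt_of_lt_of_le hξ.2 (min_le_left _ _)⟩, ?_⟩
    have hfx₁ : f x₀ ≤ f x₁ := by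
      apply hδmin
      rw [Real.dist_eq, abs_of_pos (by linarith)]
      have : x₁ ≤ x₀ + δ / 2 := min_le_right _ _
      linarith
    have hξpos : 0 ≤ deriv f ξ := by
      rw [hξs]
      apply div_nonneg (by linarith) (by linarith [hx₀x₁])
    rw [slope_def_field, hz, sub_zero]
    have h1 : (0:ℝ) < ξ - x₀ := by linarith [hξ.1]
    exact div_nonneg hξpos h1.le
  by_contra hneg
  push_neg at hneg
  have hev : ∀ᶠ x in 𝓝[>] x₀, slope (deriv f) x₀ x < 0 :=
    hslope.eventually (gt_mem_nhds hneg)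
  obtain ⟨x, hx1, hx2⟩ := (hfreq.and_eventually hev).exists
  linarith

/-- A `C³` map `g` of `[a,b]` (with `a < b`) into itself with negative Schwarzian
derivative, positive derivative, fixing both endpoints, and with `g'(a) ≥ 1`,
`g'(b) ≥ 1`, cannot exist: by the Minimum Principle `g' > 1` on `(a,b)`, so `g`
expands distances, contradicting `g([a,b]) ⊆ [a,b]`. -/
theorem no_expanding_interval_map (g : ℝ → ℝ) (a b : ℝ) (hab : a < b)
    (hg : ContDiff ℝ 3 g)
    (hS : ∀ x ∈ Icc a b, schwarzian g x < 0)
    (hd : ∀ x ∈ Icc a b, 0 < deriv g x)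
    (hga : g a = a) (hgb : g b = b)
    (hda : 1 ≤ deriv g a) (hdb : 1 ≤ deriv g b)
    (hmaps : MapsTo g (Icc a b) (Icc a b)) :
    False := by
  -- f = g'
  set f : ℝ → ℝ := deriv g with hf
  have hgd : Differentiable ℝ g := hg.differentiable (by norm_num)
  have hf2 : ContDiff ℝ 2 f := by
    have h' : ContDiff ℝ ((2 + 1 : ℕ)) g := by exact_mod_cast hg
    have := ContDiff.iterate_deriv' 2 1 h'
    simpa using this
  have hfd : Differentiable ℝ f := hf2.differentiable (by norm_num)
  have hfd2 : Differentiable ℝ (deriv f) := by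
    have h' : ContDiff ℝ ((1 + 1 : ℕ)) f := by exact_mod_cast hf2
    have := ContDiff.iterate_deriv' 1 1 h'
    simp only [Function.iterate_one] at this
    exact this.differentiable (by norm_num)
  have h2 : iteratedDeriv 2 g = deriv f := by
    rw [iteratedDeriv_succ, iteratedDeriv_one]
  have h3 : iteratedDeriv 3 g = deriv (deriv f) := by
    rw [iteratedDeriv_succ, h2]
  -- any interior minimum point gives contradiction
  have key : ∀ x₀ ∈ Ioo a b, IsMinOn f (Icc a b) x₀ → False := by
    intro x₀ hx₀ hmin
    have hnhds : Icc a b ∈ 𝓝 x₀ := Icc_mem_nhds hx₀.1 hx₀.2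
    have hloc : IsLocalMin f x₀ := hmin.isLocalMin hnhds
    have hz : deriv f x₀ = 0 := hloc.deriv_eq_zero
    have hnn : 0 ≤ deriv (deriv f) x₀ :=
      second_deriv_nonneg_of_isLocalMin hfd hloc ((hfd2 x₀).hasDerivAt)
    have hSx := hS x₀ (Ioo_subset_Icc_self hx₀)
    have hdx := hd x₀ (Ioo_subset_Icc_self hx₀)
    rw [schwarzian, h2, h3, hz] at hSx
    have : (0:ℝ) ≤ deriv (deriv f) x₀ / deriv g x₀ := div_nonneg hnn hdx.le
    simp at hSx
    linarith
  -- MVT: find c with f c = 1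
  obtain ⟨c, hc, hcs⟩ := exists_deriv_eq_slope g hab
    (hgd.continuous.continuousOn) (hgd.differentiableOn)
  rw [hga, hgb, div_self (by linarith)] at hcs
  -- minimum of f on [a,b]
  obtain ⟨x₀, hx₀, hmin⟩ := isCompact_Icc.exists_isMinOn (nonempty_Icc.mpr hab.le)
    (hf2.continuous.continuousOn)
  rcases eq_or_lt_of_le hx₀.1 with rfl | ha'
  · -- x₀ = a : min value ≥ 1 = f c, so c is also a min point
    exact key c hc (fun x hx => le_trans (hcs.trans_le hda) (hmin hx))
  rcases eq_or_lt_of_le hx₀.2 with rfl | hb'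
  · exact key c hc (fun x hx => le_trans (hcs.trans_le hdb) (hmin hx))
  exact key x₀ ⟨ha', hb'⟩ hmin
end

section
/- Let F be a map on a compact space, V an open set, and m ≥ 1 with F^m(V) ∩ V ≠ ∅. Set L̂ = ⋃_{n≥0} F^n(V), where V is connected and F maps connected sets to connected sets. Then L̂ has finitely many connected components (at most m), and if L is the component containing V, there exists ℓ with 1 ≤ ℓ ≤ m such that F^ℓ(L) ⊆ L. -/
open Set Filter Topology

/-!
Split `L̂ = ⋃ₙ Fⁿ(V)` into the `m` residue classes `Uᵣ = ⋃ⱼ F^{jm+r}(V)`, `r < m`.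
Since `F^m(V)` meets `V`, consecutive terms of `Uᵣ` meet, so each `Uᵣ` is preconnected and lies
in a single component of `L̂`; hence `L̂` has at most `m` components. For the recurrence take
`ℓ = m`: `F^m(L)` is preconnected, lies in `L̂`, and meets `L ⊇ V` at a point of `F^m(V) ∩ V`.
-/

section

variable {α : Type*} {F : α → α}

theorem mapsTo_iterate_iUnion_iterate_image (V : Set α) (k : ℕ) :
    MapsTo F^[k] (⋃ n : ℕ, F^[n] '' V) (⋃ n : ℕ, F^[n] '' V) := by
  intro _ hx
  obtain ⟨n, y, hy, rfl⟩ := mem_iUnion.1 hx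
  exact mem_iUnion.2 ⟨k + n, y, hy, Function.iterate_add_apply F k n y⟩

variable [TopologicalSpace α]

theorem IsPreconnected.image_iterate
    (hF : ∀ S : Set α, IsPreconnected S → IsPreconnected (F '' S)) (n : ℕ) {S : Set α}
    (hS : IsPreconnected S) : IsPreconnected (F^[n] '' S) := by
  induction n with
  | zero => simpa using hS
  | succ k ih =>
    rw [Function.iterate_succ', image_comp]
    exact hF _ ih

theorem isPreconnected_iUnion_iterate_image_mul_add
    (hF : ∀ S : Set α, IsPreconnected S → IsPreconnected (F '' S)) {V : Set α}
    (hV : IsPreconnected V) {m : ℕ} (hrec : (F^[m] '' V ∩ V).Nonempty) (r : ℕ) :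
    IsPreconnected (⋃ j : ℕ, F^[j * m + r] '' V) := by
  refine IsPreconnected.iUnion_of_chain (fun j => hV.image_iterate hF _) fun j => ?_
  obtain ⟨_, ⟨y, hy, rfl⟩, hyV⟩ := hrec
  refine ⟨F^[j * m + r] (F^[m] y), mem_image_of_mem _ hyV, y, hy, ?_⟩
  rw [← Function.iterate_add_apply, Order.succ_eq_add_one]
  congr 1
  ring

theorem components_iUnion_iterate_image_subset_image_Iio
    (hF : ∀ S : Set α, IsPreconnected S → IsPreconnected (F '' S)) {V : Set α}
    (hV : IsPreconnected V) {m : ℕ} (hm : 1 ≤ m) (hrec : (F^[m] '' V ∩ V).Nonempty)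
    {v : α} (hv : v ∈ V) :
    {C : Set α | ∃ p ∈ ⋃ n : ℕ, F^[n] '' V,
        C = connectedComponentIn (⋃ n : ℕ, F^[n] '' V) p} ⊆
      (fun r => connectedComponentIn (⋃ n : ℕ, F^[n] '' V) (F^[r] v)) '' Iio m := by
  rintro C ⟨p, hp, rfl⟩
  obtain ⟨n, hpn⟩ := mem_iUnion.1 hp
  refine ⟨n % m, Nat.mod_lt _ hm, ?_⟩
  have hclass : ⋃ j : ℕ, F^[j * m + n % m] '' V ⊆ ⋃ n : ℕ, F^[n] '' V :=
    iUnion_subset fun j => subset_iUnion (fun n => F^[n] '' V) _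
  have hsub := (isPreconnected_iUnion_iterate_image_mul_add hF hV hrec (n % m)
    ).subset_connectedComponentIn (mem_iUnion.2 ⟨0, by simpa using mem_image_of_mem _ hv⟩) hclass
  refine connectedComponentIn_eq (hsub (mem_iUnion.2 ⟨n / m, ?_⟩))
  rwa [Nat.div_add_mod']

theorem image_connectedComponentIn_subset_of_mapsTo {G : α → α} {s : Set α}
    (hG : ∀ S : Set α, IsPreconnected S → IsPreconnected (G '' S)) (hs : MapsTo G s s) {x : α}
    (hmeet : (G '' connectedComponentIn s x ∩ connectedComponentIn s x).Nonempty) :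
    G '' connectedComponentIn s x ⊆ connectedComponentIn s x := by
  obtain ⟨y, hyG, hy⟩ := hmeet
  rw [connectedComponentIn_eq hy] at hyG ⊢
  exact (hG _ isPreconnected_connectedComponentIn).subset_connectedComponentIn hyG
    ((image_mono (connectedComponentIn_subset s y)).trans hs.image_subset)

end

theorem finitely_many_components_and_recurrence_general {α : Type*}
    [TopologicalSpace α]
    (F : α → α) (V : Set α) (hVconn : IsPreconnected V)
    (hFconn : ∀ S : Set α, IsPreconnected S → IsPreconnected (F '' S))
    (m : ℕ) (hm : 1 ≤ m) (hrec : (F^[m] '' V ∩ V).Nonempty) :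
    let Lhat : Set α := ⋃ n : ℕ, F^[n] '' V
    ({C : Set α | ∃ p ∈ Lhat, C = connectedComponentIn Lhat p}.Finite ∧
      {C : Set α | ∃ p ∈ Lhat, C = connectedComponentIn Lhat p}.ncard ≤ m) ∧
    ∀ v ∈ V, ∃ ℓ : ℕ, 1 ≤ ℓ ∧ ℓ ≤ m ∧
      F^[ℓ] '' connectedComponentIn Lhat v ⊆ connectedComponentIn Lhat v := by
  intro Lhat
  obtain ⟨v₀, hv₀⟩ := hrec.mono inter_subset_right
  have hsub := components_iUnion_iterate_image_subset_image_Iio hFconn hVconn hm hrec hv₀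
  have hfin := (finite_Iio m).image fun r => connectedComponentIn Lhat (F^[r] v₀)
  refine ⟨⟨hfin.subset hsub, ?_⟩, fun v hv => ⟨m, hm, le_rfl, ?_⟩⟩
  · calc _ ≤ _ := ncard_le_ncard hsub hfin
      _ ≤ (Iio m).ncard := ncard_image_le (finite_Iio m)
      _ = m := ncard_Iio_nat m
  · have hVL : V ⊆ connectedComponentIn Lhat v :=
      hVconn.subset_connectedComponentIn hv fun x hx => mem_iUnion.2 ⟨0, by simpa using hx⟩
    refine image_connectedComponentIn_subset_of_mapsTo (fun S hS => hS.image_iterate hFconn m)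
      (mapsTo_iterate_iUnion_iterate_image V m) ?_
    obtain ⟨x, hxF, hxV⟩ := hrec
    exact ⟨x, image_mono hVL hxF, hVL hxV⟩

/-- If `V` is a nonempty connected set, `F` preserves connectedness, and
`F^m(V) ∩ V ≠ ∅` for some `m ≥ 1`, then `L̂ = ⋃ₙ Fⁿ(V)` has at most `m`
connected components, and the component `L` of `L̂` containing `V` satisfies
`F^ℓ(L) ⊆ L` for some `1 ≤ ℓ ≤ m`. -/
theorem finitely_many_components_and_recurrence {α : Type*}
    [TopologicalSpace α] [CompactSpace α]
    (F : α → α) (V : Set α) (hV : V.Nonempty) (hVconn : IsPreconnected V)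
    (hFconn : ∀ S : Set α, IsPreconnected S → IsPreconnected (F '' S))
    (m : ℕ) (hm : 1 ≤ m) (hrec : (F^[m] '' V ∩ V).Nonempty) :
    let Lhat : Set α := ⋃ n : ℕ, F^[n] '' V
    ({C : Set α | ∃ p ∈ Lhat, C = connectedComponentIn Lhat p}.Finite ∧
      {C : Set α | ∃ p ∈ Lhat, C = connectedComponentIn Lhat p}.ncard ≤ m) ∧
    ∀ v ∈ V, ∃ ℓ : ℕ, 1 ≤ ℓ ∧ ℓ ≤ m ∧
      F^[ℓ] '' connectedComponentIn Lhat v ⊆ connectedComponentIn Lhat v :=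
  finitely_many_components_and_recurrence_general F V hVconn hFconn m hm hrec
end
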